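/- arXiv:1606.02363 — 8 statements merged into one kernel-verified Lean document; each statement's English description precedes it below -/
import Mathlib

section
/- Let α > 0, σ > 0, d ≥ 0 and s ≥ 1 be real numbers with s·(σ + d) ≤ α. Let n ∈ ℕ and, for i = 1,…,n, let r_i ∈ (0,1) and t_i ∈ ℝ be given; set I_i = (t_i − 2·r_i^α, t_i + 2·r_i^α) and H = Σ_{i=1}^n r_i^d. Then ∫_ℝ ( Σ_{i=1}^n r_i^{−σ} · χ_{I_i}(t) )^s dt ≤ 4·H^s. -/
open MeasureTheory Set

/-- Lemma 3.2 of the paper, case `s ≥ 1`: with `I_i = (t_i - 2 r_i^α, t_i + 2 r_i^α)` and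
`H = ∑ r_i^d`, one has `∫ (∑ r_i^{-σ} χ_{I_i})^s ≤ 4 H^s` whenever `s (σ + d) ≤ α`. -/
theorem stmt_0 (α σ d s : ℝ) (hα : 0 < α) (hσ : 0 < σ) (hd : 0 ≤ d) (hs : 1 ≤ s)
    (hcond : s * (σ + d) ≤ α) (n : ℕ) (r t : Fin n → ℝ)
    (hr : ∀ i, r i ∈ Set.Ioo (0 : ℝ) 1) :
    ∫ x : ℝ,
        (∑ i, r i ^ (-σ) *
          Set.indicator (Set.Ioo (t i - 2 * r i ^ α) (t i + 2 * r i ^ α))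
            (fun _ => (1 : ℝ)) x) ^ s
      ≤ 4 * (∑ i, r i ^ d) ^ s := by
  have hs0 : s ≠ 0 := by linarith
  rcases Nat.eq_zero_or_pos n with hn | hn
  · subst hn
    simp [Real.zero_rpow hs0]
  -- Notation
  set H : ℝ := ∑ i, r i ^ d with hH
  have hrpos : ∀ i, 0 < r i := fun i => (hr i).1
  have hrlt : ∀ i, r i < 1 := fun i => (hr i).2
  have hHpos : 0 < H := by
    have : Nonempty (Fin n) := Fin.pos_iff_nonempty.mp hn
    exact Finset.sum_pos (fun i _ => Real.rpow_pos_of_pos (hrpos i) d) Finset.univ_nonempty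
  set ind : Fin n → ℝ → ℝ := fun i x =>
    Set.indicator (Set.Ioo (t i - 2 * r i ^ α) (t i + 2 * r i ^ α)) (fun _ => (1 : ℝ)) x
    with hind
  have hind01 : ∀ i x, ind i x = 0 ∨ ind i x = 1 := by
    intro i x
    by_cases hx : x ∈ Set.Ioo (t i - 2 * r i ^ α) (t i + 2 * r i ^ α)
    · right; simp [hind, hx]
    · left; simp [hind, hx]
  have hindnn : ∀ i x, 0 ≤ ind i x := by
    intro i x; rcases hind01 i x with h | h <;> simp [h]
  -- constants
  set c : Fin n → ℝ := fun i => (r i ^ d / H) * (H * r i ^ (-(σ + d))) ^ s with hc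
  have hcnn : ∀ i, 0 ≤ c i := by
    intro i
    apply mul_nonneg (div_nonneg (Real.rpow_nonneg (hrpos i).le d) hHpos.le)
    exact Real.rpow_nonneg (mul_nonneg hHpos.le (Real.rpow_nonneg (hrpos i).le _)) s
  -- pointwise bound
  have key : ∀ x : ℝ, (∑ i, r i ^ (-σ) * ind i x) ^ s ≤ ∑ i, c i * ind i x := by
    intro x
    have h := Real.rpow_arith_mean_le_arith_mean_rpow Finset.univ
      (fun i => r i ^ d / H) (fun i => H * r i ^ (-(σ + d)) * ind i x)
      (fun i _ => div_nonneg (Real.rpow_nonneg (hrpos i).le d) hHpos.le)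
      (by rw [← Finset.sum_div, ← hH, div_self hHpos.ne'])
      (fun i _ => mul_nonneg (mul_nonneg hHpos.le
        (Real.rpow_nonneg (hrpos i).le _)) (hindnn i x)) hs
    have e1 : ∀ i, r i ^ d / H * (H * r i ^ (-(σ + d)) * ind i x)
        = r i ^ (-σ) * ind i x := by
      intro i
      have h2 : r i ^ d * r i ^ (-(σ + d)) = r i ^ (-σ) := by
        rw [← Real.rpow_add (hrpos i)]; congr 1; ring
      rw [← h2]
      field_simp
    have e2 : ∀ i, r i ^ d / H * (H * r i ^ (-(σ + d)) * ind i x) ^ s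
        = c i * ind i x := by
      intro i
      rcases hind01 i x with h | h <;>
        simp [hc, h, Real.zero_rpow hs0, Real.one_rpow]
    calc (∑ i, r i ^ (-σ) * ind i x) ^ s
        = (∑ i, r i ^ d / H * (H * r i ^ (-(σ + d)) * ind i x)) ^ s := by
          simp_rw [e1]
      _ ≤ ∑ i, r i ^ d / H * (H * r i ^ (-(σ + d)) * ind i x) ^ s := h
      _ = ∑ i, c i * ind i x := by simp_rw [e2]
  -- integrability of the majorant
  have hmeas : ∀ i, MeasurableSet (Set.Ioo (t i - 2 * r i ^ α) (t i + 2 * r i ^ α)) :=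
    fun i => measurableSet_Ioo
  have hint_ind : ∀ i, Integrable (fun x => c i * ind i x) := by
    intro i
    have : (fun x => c i * ind i x) = fun x =>
        Set.indicator (Set.Ioo (t i - 2 * r i ^ α) (t i + 2 * r i ^ α))
          (fun _ => c i) x := by
      funext x
      by_cases hx : x ∈ Set.Ioo (t i - 2 * r i ^ α) (t i + 2 * r i ^ α) <;>
        simp [hind, hx]
    rw [this, integrable_indicator_iff (hmeas i)]
    apply (integrableOn_const_iff (C := c i)).mpr
    right
    rw [Real.volume_Ioo]
    exact ENNReal.ofReal_lt_top
  have hint : Integrable (fun x => ∑ i, c i * ind i x) :=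
    integrable_finset_sum _ (fun i _ => hint_ind i)
  -- integrate
  have step1 : ∫ x : ℝ, (∑ i, r i ^ (-σ) * ind i x) ^ s ≤ ∫ x, ∑ i, c i * ind i x := by
    apply integral_mono_of_nonneg
    · filter_upwards with x
      exact Real.rpow_nonneg (Finset.sum_nonneg fun i _ =>
        mul_nonneg (Real.rpow_nonneg (hrpos i).le _) (hindnn i x)) s
    · exact hint
    · filter_upwards with x using key x
  have hvol : ∀ i, ∫ x, ind i x = 4 * r i ^ α := by
    intro i
    rw [hind]
    simp only [integral_indicator_const (1 : ℝ) (hmeas i), smul_eq_mul, mul_one]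
    rw [measureReal_def, Real.volume_Ioo, ENNReal.toReal_ofReal (by nlinarith [Real.rpow_pos_of_pos (hrpos i) α])]
    ring
  have step2 : ∫ x, ∑ i, c i * ind i x = ∑ i, c i * (4 * r i ^ α) := by
    rw [integral_finset_sum _ (fun i _ => hint_ind i)]
    congr 1
    funext i
    rw [integral_const_mul, hvol i]
  -- final estimate
  have step3 : ∑ i, c i * (4 * r i ^ α) ≤ 4 * H ^ s := by
    have hterm : ∀ i, c i * (4 * r i ^ α) ≤ 4 * H ^ (s - 1) * r i ^ d := by
      intro i
      have hr0 : (0:ℝ) < r i := hrpos i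
      have hHrs : (H * r i ^ (-(σ + d))) ^ s = H ^ s * r i ^ (-(σ + d) * s) := by
        rw [Real.mul_rpow hHpos.le (Real.rpow_nonneg hr0.le _), ← Real.rpow_mul hr0.le]
      have hHs : H ^ (s - 1) = H ^ s / H := by
        rw [Real.rpow_sub hHpos, Real.rpow_one]
      have : c i * (4 * r i ^ α) = 4 * H ^ (s - 1) * r i ^ (d + (-(σ + d) * s) + α) := by
        rw [hc]
        simp only
        rw [hHrs, Real.rpow_add hr0, Real.rpow_add hr0, hHs]
        field_simp
      rw [this]
      have hexp : d ≤ d + (-(σ + d) * s) + α := by nlinarith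
      have := Real.rpow_le_rpow_of_exponent_ge hr0 (hrlt i).le hexp
      have h4 : (0:ℝ) ≤ 4 * H ^ (s - 1) := by positivity
      nlinarith [Real.rpow_nonneg hr0.le (d + (-(σ + d) * s) + α)]
    calc ∑ i, c i * (4 * r i ^ α) ≤ ∑ i, 4 * H ^ (s - 1) * r i ^ d :=
          Finset.sum_le_sum fun i _ => hterm i
      _ = 4 * H ^ (s - 1) * H := by rw [← Finset.mul_sum, hH]
      _ = 4 * H ^ s := by
          rw [Real.rpow_sub hHpos, Real.rpow_one, mul_assoc,
            div_mul_cancel₀ _ hHpos.ne']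
  calc ∫ x : ℝ, (∑ i, r i ^ (-σ) * ind i x) ^ s
      ≤ ∫ x, ∑ i, c i * ind i x := step1
    _ = ∑ i, c i * (4 * r i ^ α) := step2
    _ ≤ 4 * H ^ s := step3
end

section
/- Let α > 0, σ > 0, d > 0 and 0 < s < 1 be real numbers with s·(σ + d) < α. Then there exists a constant C > 0, depending only on α, σ, d and s (and in particular independent of the family below), such that for every n ∈ ℕ and every family r_1,…,r_n ∈ (0,1), setting I_i = (−2·r_i^α, 2·r_i^α) and H = Σ_{i=1}^n r_i^d, one has ∫_ℝ ( Σ_{i=1}^n r_i^{−σ} · χ_{I_i}(t) )^s dt ≤ C·H^s. -/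
open MeasureTheory Set

lemma aux_abs_rpow_integrable (β : ℝ) (hβ1 : β < 1) :
    IntegrableOn (fun x : ℝ => |x| ^ (-β)) (Set.Ioo (-2 : ℝ) 2) := by
  have h1 : IntegrableOn (fun x : ℝ => x ^ (-β)) (Set.Ioo (0:ℝ) 2) :=
    (intervalIntegral.integrableOn_Ioo_rpow_iff (by norm_num)).2 (by linarith)
  have h1' : IntegrableOn (fun x : ℝ => |x| ^ (-β)) (Set.Ioo (0:ℝ) 2) := by
    refine h1.congr_fun (fun x hx => ?_) measurableSet_Ioo
    rw [abs_of_pos hx.1]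
  have h2 : IntegrableOn (fun x : ℝ => |x| ^ (-β)) (Set.Ioo (-2:ℝ) 0) := by
    have := (MeasurePreserving.integrableOn_comp_preimage (Measure.measurePreserving_neg _)
      (Homeomorph.neg ℝ).measurableEmbedding).2 h1'
    have hset : (Neg.neg ⁻¹' Set.Ioo (0:ℝ) 2 : Set ℝ) = Set.Ioo (-2:ℝ) 0 := by
      ext x; simp only [Set.mem_preimage, Set.mem_Ioo]
      constructor <;> intro h <;> constructor <;> linarith [h.1, h.2]
    rw [hset] at this
    refine this.congr_fun (fun x hx => ?_) measurableSet_Ioo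
    simp [abs_neg]
  have h2' : IntegrableOn (fun x : ℝ => |x| ^ (-β)) (Set.Ioc (-2:ℝ) 0) :=
    h2.congr_set_ae Ioo_ae_eq_Ioc.symm
  have h1'' : IntegrableOn (fun x : ℝ => |x| ^ (-β)) (Set.Ioc (0:ℝ) 2) :=
    h1'.congr_set_ae Ioo_ae_eq_Ioc.symm
  have hu : IntegrableOn (fun x : ℝ => |x| ^ (-β)) (Set.Ioc (-2:ℝ) 0 ∪ Set.Ioc 0 2) :=
    h2'.union h1''
  refine hu.mono_set (fun x hx => ?_)
  rcases le_or_gt x 0 with h | h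
  · exact Or.inl ⟨hx.1, h⟩
  · exact Or.inr ⟨h, hx.2.le⟩

/-- Lemma 3.2 of the paper, case `s < 1` with nested intervals `I_i = (-2 r_i^α, 2 r_i^α)`:
there is a constant `C`, independent of the family, with
`∫ (∑ r_i^{-σ} χ_{I_i})^s ≤ C H^s` whenever `s (σ + d) < α`. -/
theorem stmt_1 (α σ d s : ℝ) (hα : 0 < α) (hσ : 0 < σ) (hd : 0 < d)
    (hs0 : 0 < s) (hs1 : s < 1) (hcond : s * (σ + d) < α) :
    ∃ C > (0 : ℝ), ∀ (n : ℕ) (r : Fin n → ℝ), (∀ i, r i ∈ Set.Ioo (0 : ℝ) 1) →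
      ∫ x : ℝ,
          (∑ i, r i ^ (-σ) *
            Set.indicator (Set.Ioo (-(2 * r i ^ α)) (2 * r i ^ α))
              (fun _ => (1 : ℝ)) x) ^ s
        ≤ C * (∑ i, r i ^ d) ^ s := by
  set β : ℝ := s * (σ + d) / α with hβdef
  have hβ0 : 0 < β := by positivity
  have hβ1 : β < 1 := (div_lt_one hα).2 hcond
  set I : ℝ := ∫ x in Set.Ioo (-2:ℝ) 2, (|x| / 2) ^ (-β) with hIdef
  have hI0 : 0 ≤ I := integral_nonneg fun x => Real.rpow_nonneg (by positivity) _
  refine ⟨I + 1, by linarith, ?_⟩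
  intro n r hr
  set H : ℝ := ∑ i, r i ^ d with hHdef
  have hH0 : 0 ≤ H := Finset.sum_nonneg fun i _ => Real.rpow_nonneg (hr i).1.le _
  have hHs : 0 ≤ H ^ s := Real.rpow_nonneg hH0 s
  set g : ℝ → ℝ := Set.indicator (Set.Ioo (-2:ℝ) 2) (fun x => H ^ s * (|x| / 2) ^ (-β))
    with hgdef
  -- integrability of the majorant
  have hbase : IntegrableOn (fun x : ℝ => (|x| / 2) ^ (-β)) (Set.Ioo (-2:ℝ) 2) := by
    have h : IntegrableOn (fun x : ℝ => |x| ^ (-β) / 2 ^ (-β)) (Set.Ioo (-2:ℝ) 2) :=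
      (aux_abs_rpow_integrable β hβ1).div_const ((2:ℝ) ^ (-β))
    refine h.congr_fun (fun x _ => ?_) measurableSet_Ioo
    rw [Real.div_rpow (abs_nonneg x) (by norm_num)]
  have hgint : Integrable g := by
    rw [hgdef, integrable_indicator_iff measurableSet_Ioo]
    exact hbase.const_mul _
  -- subset fact
  have hsub : ∀ i, Set.Ioo (-(2 * r i ^ α)) (2 * r i ^ α) ⊆ Set.Ioo (-2:ℝ) 2 := by
    intro i
    have h1 : r i ^ α ≤ 1 := Real.rpow_le_one (hr i).1.le (hr i).2.le hα.le
    intro y hy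
    exact ⟨by nlinarith [hy.1], by nlinarith [hy.2]⟩
  -- a.e. pointwise bound
  have hae : ∀ᵐ x : ℝ,
      (∑ i, r i ^ (-σ) *
        Set.indicator (Set.Ioo (-(2 * r i ^ α)) (2 * r i ^ α)) (fun _ => (1:ℝ)) x) ^ s
        ≤ g x := by
    have h0 : ∀ᵐ x : ℝ, x ≠ (0:ℝ) := by
      rw [ae_iff]
      simpa using (Real.volume_singleton (x := (0:ℝ)))
    filter_upwards [h0] with x hx
    by_cases hx2 : x ∈ Set.Ioo (-2:ℝ) 2
    · rw [hgdef, Set.indicator_of_mem hx2]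
      have hxpos : 0 < |x| := abs_pos.2 hx
      have hsum0 : 0 ≤ ∑ i, r i ^ (-σ) *
          Set.indicator (Set.Ioo (-(2 * r i ^ α)) (2 * r i ^ α)) (fun _ => (1:ℝ)) x :=
        Finset.sum_nonneg fun i _ => mul_nonneg (Real.rpow_nonneg (hr i).1.le _)
          (Set.indicator_nonneg (fun _ _ => zero_le_one) x)
      have key : (∑ i, r i ^ (-σ) *
          Set.indicator (Set.Ioo (-(2 * r i ^ α)) (2 * r i ^ α)) (fun _ => (1:ℝ)) x)
          ≤ H * (|x| / 2) ^ (-((σ + d) / α)) := by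
        rw [hHdef, Finset.sum_mul]
        refine Finset.sum_le_sum fun i _ => ?_
        by_cases hxi : x ∈ Set.Ioo (-(2 * r i ^ α)) (2 * r i ^ α)
        · rw [Set.indicator_of_mem hxi, mul_one]
          have hri := hr i
          have h1 : |x| < 2 * r i ^ α := abs_lt.2 ⟨by linarith [hxi.1], hxi.2⟩
          have h2 : |x| / 2 < r i ^ α := by linarith
          have h3 : (|x| / 2) ^ (α⁻¹) < r i := by
            calc (|x| / 2) ^ (α⁻¹) < (r i ^ α) ^ (α⁻¹) :=
                  Real.rpow_lt_rpow (by positivity) h2 (by positivity)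
              _ = r i := by
                  rw [← Real.rpow_mul hri.1.le, mul_inv_cancel₀ hα.ne', Real.rpow_one]
          have h4 : r i ^ (-(σ + d)) ≤ ((|x| / 2) ^ (α⁻¹)) ^ (-(σ + d)) :=
            Real.rpow_le_rpow_of_nonpos (by positivity) h3.le (by linarith)
          have h5 : r i ^ (-σ) = r i ^ d * r i ^ (-(σ + d)) := by
            rw [← Real.rpow_add hri.1]; ring_nf
          rw [h5]
          refine (mul_le_mul_of_nonneg_left h4 (Real.rpow_nonneg hri.1.le d)).trans_eq ?_
          have hxx : (0:ℝ) ≤ |x| / 2 := by positivity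
          rw [← Real.rpow_mul hxx]
          congr 1
          field_simp
        · rw [Set.indicator_of_notMem hxi, mul_zero]
          exact mul_nonneg (Real.rpow_nonneg (hr i).1.le _)
            (Real.rpow_nonneg (by positivity) _)
      calc (∑ i, r i ^ (-σ) *
            Set.indicator (Set.Ioo (-(2 * r i ^ α)) (2 * r i ^ α)) (fun _ => (1:ℝ)) x) ^ s
          ≤ (H * (|x| / 2) ^ (-((σ + d) / α))) ^ s := Real.rpow_le_rpow hsum0 key hs0.le
        _ = H ^ s * ((|x| / 2) ^ (-((σ + d) / α))) ^ s :=
            Real.mul_rpow hH0 (Real.rpow_nonneg (by positivity) _)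
        _ = H ^ s * (|x| / 2) ^ (-β) := by
            have hxx : (0:ℝ) ≤ |x| / 2 := by positivity
            rw [← Real.rpow_mul hxx]
            congr 2
            rw [hβdef]; ring
    · rw [hgdef, Set.indicator_of_notMem hx2]
      have hz : ∀ i, Set.indicator (Set.Ioo (-(2 * r i ^ α)) (2 * r i ^ α))
          (fun _ => (1:ℝ)) x = 0 :=
        fun i => Set.indicator_of_notMem (fun hmem => hx2 (hsub i hmem)) _
      simp only [hz, mul_zero, Finset.sum_const_zero]
      rw [Real.zero_rpow hs0.ne']
  -- conclude
  have hf0 : 0 ≤ᵐ[volume] fun x : ℝ =>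
      (∑ i, r i ^ (-σ) *
        Set.indicator (Set.Ioo (-(2 * r i ^ α)) (2 * r i ^ α)) (fun _ => (1:ℝ)) x) ^ s :=
    Filter.Eventually.of_forall fun x => Real.rpow_nonneg
      (Finset.sum_nonneg fun i _ => mul_nonneg (Real.rpow_nonneg (hr i).1.le _)
        (Set.indicator_nonneg (fun _ _ => zero_le_one) x)) s
  have hmain := integral_mono_of_nonneg hf0 hgint hae
  refine hmain.trans ?_
  rw [hgdef, integral_indicator measurableSet_Ioo, integral_const_mul, ← hIdef]
  nlinarith [hHs, hI0]
end

section
/- Let α > 0, σ > 0, d ≥ 0 and 0 < s ≤ 1 be real numbers with s·σ + d ≤ α. For every n ∈ ℕ and every choice of r_i ∈ (0,1) and t_i ∈ ℝ for i = 1,…,n, setting I_i = (t_i − 2·r_i^α, t_i + 2·r_i^α) and H = Σ_{i=1}^n r_i^d, one has ∫_ℝ ( Σ_{i=1}^n r_i^{−σ} · χ_{I_i}(t) )^s dt ≤ 4·H. -/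
open MeasureTheory Set
open scoped NNReal

private lemma add_rpow_le' {a b s : ℝ} (ha : 0 ≤ a) (hb : 0 ≤ b) (hs0 : 0 ≤ s)
    (hs1 : s ≤ 1) : (a + b) ^ s ≤ a ^ s + b ^ s := by
  have := NNReal.rpow_add_le_add_rpow (⟨a, ha⟩ : ℝ≥0) ⟨b, hb⟩ hs0 hs1
  have h := (NNReal.coe_le_coe.2 this)
  exact h

private lemma sum_rpow_le {n : ℕ} {f : Fin n → ℝ} {s : ℝ} (hf : ∀ i, 0 ≤ f i)
    (hs0 : 0 < s) (hs1 : s ≤ 1) :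
    (∑ i, f i) ^ s ≤ ∑ i, (f i) ^ s := by
  classical
  induction n with
  | zero => simp [Real.zero_rpow hs0.ne']
  | succ m ih =>
      rw [Fin.sum_univ_succ, Fin.sum_univ_succ (f := fun i => f i ^ s)]
      calc (f 0 + ∑ i : Fin m, f i.succ) ^ s
          ≤ (f 0) ^ s + (∑ i : Fin m, f i.succ) ^ s :=
            add_rpow_le' (hf 0) (Finset.sum_nonneg fun i _ => hf i.succ) hs0.le hs1
        _ ≤ (f 0) ^ s + ∑ i : Fin m, (f i.succ) ^ s := by
            gcongr
            exact ih (fun i => hf i.succ)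

/-- The Section 4 variant of the time-interval sum lemma: for `0 < s ≤ 1`, arbitrary centers
`t_i`, and `s σ + d ≤ α`, one has `∫ (∑ r_i^{-σ} χ_{I_i})^s ≤ 4 H` with `H = ∑ r_i^d`. -/
theorem stmt_2 (α σ d s : ℝ) (hα : 0 < α) (hσ : 0 < σ) (hd : 0 ≤ d)
    (hs0 : 0 < s) (hs1 : s ≤ 1) (hcond : s * σ + d ≤ α)
    (n : ℕ) (r t : Fin n → ℝ) (hr : ∀ i, r i ∈ Set.Ioo (0 : ℝ) 1) :
    ∫ x : ℝ,
        (∑ i, r i ^ (-σ) *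
          Set.indicator (Set.Ioo (t i - 2 * r i ^ α) (t i + 2 * r i ^ α))
            (fun _ => (1 : ℝ)) x) ^ s
      ≤ 4 * (∑ i, r i ^ d) := by
  classical
  set I : Fin n → Set ℝ := fun i => Set.Ioo (t i - 2 * r i ^ α) (t i + 2 * r i ^ α) with hI
  set g : ℝ → ℝ := fun x => ∑ i, (r i ^ (-σ)) ^ s * (I i).indicator (fun _ => (1:ℝ)) x with hg
  have hrpos : ∀ i, 0 < r i := fun i => (hr i).1
  have hind_nonneg : ∀ (i : Fin n) (x : ℝ),
      0 ≤ (I i).indicator (fun _ => (1:ℝ)) x := by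
    intro i x
    exact Set.indicator_nonneg (fun _ _ => zero_le_one) x
  have hterm_nonneg : ∀ (i : Fin n) (x : ℝ),
      0 ≤ r i ^ (-σ) * (I i).indicator (fun _ => (1:ℝ)) x := by
    intro i x
    exact mul_nonneg (Real.rpow_nonneg (hrpos i).le _) (hind_nonneg i x)
  have hgint : Integrable g := by
    apply integrable_finset_sum
    intro i _
    apply Integrable.const_mul
    rw [integrable_indicator_iff measurableSet_Ioo]
    exact integrableOn_const (by simp [Real.volume_Ioo])
  have hptwise : ∀ x : ℝ,
      (∑ i, r i ^ (-σ) * (I i).indicator (fun _ => (1:ℝ)) x) ^ s ≤ g x := by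
    intro x
    calc (∑ i, r i ^ (-σ) * (I i).indicator (fun _ => (1:ℝ)) x) ^ s
        ≤ ∑ i, (r i ^ (-σ) * (I i).indicator (fun _ => (1:ℝ)) x) ^ s :=
          sum_rpow_le (fun i => hterm_nonneg i x) hs0 hs1
      _ ≤ g x := by
          apply Finset.sum_le_sum
          intro i _
          rw [Real.mul_rpow (Real.rpow_nonneg (hrpos i).le _) (hind_nonneg i x)]
          gcongr
          · exact Real.rpow_nonneg (Real.rpow_nonneg (hrpos i).le _) _
          by_cases hx : x ∈ I i
          · simp [Set.indicator_of_mem hx]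
          · simp [Set.indicator_of_notMem hx, Real.zero_rpow hs0.ne']
  have h1 : ∫ x, (∑ i, r i ^ (-σ) * (I i).indicator (fun _ => (1:ℝ)) x) ^ s
      ≤ ∫ x, g x := by
    apply integral_mono_of_nonneg
    · filter_upwards with x
      exact Real.rpow_nonneg (Finset.sum_nonneg fun i _ => hterm_nonneg i x) s
    · exact hgint
    · filter_upwards with x using hptwise x
  refine h1.trans ?_
  have hvol : ∀ i : Fin n,
      ∫ x, (I i).indicator (fun _ => (1:ℝ)) x = 4 * r i ^ α := by
    intro i
    rw [integral_indicator measurableSet_Ioo]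
    have hpos : (0:ℝ) < r i ^ α := Real.rpow_pos_of_pos (hrpos i) α
    simp only [integral_const, smul_eq_mul, mul_one, Measure.restrict_apply_univ,
      Real.volume_Ioo]
    rw [measureReal_def, Measure.restrict_apply_univ, Real.volume_Ioo, ENNReal.toReal_ofReal (by linarith)]
    ring
  rw [hg, integral_finset_sum]
  · have : ∀ i : Fin n,
        ∫ x, (r i ^ (-σ)) ^ s * (I i).indicator (fun _ => (1:ℝ)) x ≤ 4 * r i ^ d := by
      intro i
      rw [integral_const_mul, hvol i]
      have hr0 := hrpos i
      have hr1 := (hr i).2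
      have key : r i ^ (-σ * s + α) ≤ r i ^ d :=
        Real.rpow_le_rpow_of_exponent_ge hr0 hr1.le (by nlinarith)
      have heq : (r i ^ (-σ)) ^ s * (4 * r i ^ α) = 4 * r i ^ (-σ * s + α) := by
        rw [Real.rpow_add hr0, ← Real.rpow_mul hr0.le]; ring
      rw [heq]; linarith
    calc ∑ i, ∫ x, (r i ^ (-σ)) ^ s * (I i).indicator (fun _ => (1:ℝ)) x
        ≤ ∑ i, 4 * r i ^ d := Finset.sum_le_sum fun i _ => this i
      _ = 4 * ∑ i, r i ^ d := by rw [Finset.mul_sum]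
  · intro i _
    apply Integrable.const_mul
    rw [integrable_indicator_iff measurableSet_Ioo]
    exact integrableOn_const (by simp [Real.volume_Ioo])
end

section
/- Let α > σ > 0 be real numbers. For every n ∈ ℕ and every family r_1,…,r_n ∈ (0,1), setting I_i = (−2·r_i^α, 2·r_i^α), one has ∫_ℝ max_{1 ≤ i ≤ n} ( r_i^{−σ} · χ_{I_i}(t) ) dt ≤ 4α/(α−σ). -/
open MeasureTheory Set

/-- The estimate `‖∇φ‖_{L^σ L^∞}^σ ≤ 4α/(α-σ)` from Section 3 of the paper:
for `0 < σ < α` and radii `r_i ∈ (0,1)` with `I_i = (-2 r_i^α, 2 r_i^α)`,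
`∫ max_i (r_i^{-σ} χ_{I_i}(t)) dt ≤ 4α/(α-σ)`. -/
theorem stmt_3 (α σ : ℝ) (hσ : 0 < σ) (hσα : σ < α)
    (n : ℕ) (r : Fin n → ℝ) (hr : ∀ i, r i ∈ Set.Ioo (0 : ℝ) 1) :
    ∫ x : ℝ,
        (⨆ i, r i ^ (-σ) *
          Set.indicator (Set.Ioo (-(2 * r i ^ α)) (2 * r i ^ α))
            (fun _ => (1 : ℝ)) x)
      ≤ 4 * α / (α - σ) := by
  have hα : (0:ℝ) < α := hσ.trans hσα
  set p : ℝ := σ / α with hp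
  have hp0 : 0 < p := div_pos hσ hα
  have hp1 : p < 1 := (div_lt_one hα).mpr hσα
  set h : ℝ → ℝ := fun x => (|x| / 2) ^ (-p) with hh
  set g : ℝ → ℝ := Set.indicator (Set.Ioo (-2 : ℝ) 2) h with hg
  set f : ℝ → ℝ := fun x => ⨆ i, r i ^ (-σ) *
      Set.indicator (Set.Ioo (-(2 * r i ^ α)) (2 * r i ^ α)) (fun _ => (1 : ℝ)) x with hf
  have hh_nonneg : ∀ x, 0 ≤ h x := fun x => Real.rpow_nonneg (by positivity) _
  have hg_nonneg : ∀ x, 0 ≤ g x := fun x =>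
    Set.indicator_nonneg (fun y _ => hh_nonneg y) x
  have hf_nonneg : ∀ x, 0 ≤ f x := by
    intro x
    apply Real.iSup_nonneg
    intro i
    exact mul_nonneg (Real.rpow_nonneg (hr i).1.le _)
      (Set.indicator_nonneg (fun _ _ => zero_le_one) x)
  -- the pointwise bound away from 0
  have hbound : ∀ x : ℝ, x ≠ 0 → f x ≤ g x := by
    intro x hx
    apply Real.iSup_le _ (hg_nonneg x)
    intro i
    obtain ⟨hri0, hri1⟩ := hr i
    by_cases hxi : x ∈ Set.Ioo (-(2 * r i ^ α)) (2 * r i ^ α)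
    · rw [Set.indicator_of_mem hxi, mul_one]
      have hrα : r i ^ α < 1 := Real.rpow_lt_one hri0.le hri1 hα
      have habs : |x| < 2 * r i ^ α := abs_lt.mpr ⟨hxi.1, hxi.2⟩
      have hx2 : x ∈ Set.Ioo (-2 : ℝ) 2 := by
        constructor <;> nlinarith [hxi.1, hxi.2]
      rw [hg, Set.indicator_of_mem hx2]
      have h1 : (r i ^ α) ^ (-p) ≤ (|x| / 2) ^ (-p) := by
        apply Real.rpow_le_rpow_of_nonpos
        · have : 0 < |x| := abs_pos.mpr hx
          positivity
        · linarith
        · linarith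
      have h2 : (r i ^ α) ^ (-p) = r i ^ (-σ) := by
        rw [← Real.rpow_mul hri0.le]
        congr 1
        rw [hp]
        field_simp
      rw [h2] at h1
      exact h1
    · rw [Set.indicator_of_notMem hxi, mul_zero]
      exact hg_nonneg x
  have hbound_ae : ∀ᵐ x : ℝ, f x ≤ g x := by
    have hne : ∀ᵐ x : ℝ, x ≠ 0 := by
      rw [ae_iff]
      have : {x : ℝ | ¬ x ≠ 0} = {0} := by ext x; simp
      rw [this]
      exact Real.volume_singleton
    filter_upwards [hne] with x hx using hbound x hx
  -- integrability of h on (0,2)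
  have hII : IntervalIntegrable h volume 0 2 := by
    have base : IntervalIntegrable (fun x : ℝ => x ^ (-p) / 2 ^ (-p)) volume 0 2 :=
      (intervalIntegral.intervalIntegrable_rpow' (by linarith)).div_const _
    apply base.congr_ae
    rw [Filter.EventuallyEq, ae_restrict_iff' measurableSet_uIoc]
    apply Filter.Eventually.of_forall
    intro x hx
    rw [Set.uIoc_of_le (by norm_num : (0:ℝ) ≤ 2)] at hx
    show x ^ (-p) / 2 ^ (-p) = (|x| / 2) ^ (-p)
    rw [abs_of_pos hx.1, Real.div_rpow hx.1.le (by norm_num)]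
  have hIIneg : IntervalIntegrable h volume (-2) 0 := by
    have : IntervalIntegrable (fun x => h (-x)) volume (-0) (-2) :=
      (IntervalIntegrable.iff_comp_neg enorm_ne_top).mp hII
    have heq : (fun x => h (-x)) = h := by
      funext x; simp [hh, abs_neg]
    rw [heq] at this
    rw [neg_zero] at this
    exact this.symm
  have hIIfull : IntervalIntegrable h volume (-2) 2 := hIIneg.trans hII
  have hg_int : Integrable g := by
    rw [hg, integrable_indicator_iff measurableSet_Ioo]
    exact (intervalIntegrable_iff.mp hIIfull).mono_set
      (by rw [Set.uIoc_of_le (by norm_num : (-2:ℝ) ≤ 2)]; exact Set.Ioo_subset_Ioc_self)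
  -- measurability and integrability of f
  have hf_meas : Measurable f := by
    apply Measurable.iSup
    intro i
    exact (measurable_const.indicator measurableSet_Ioo).const_mul _
  have hf_int : Integrable f := by
    apply hg_int.mono hf_meas.aestronglyMeasurable
    filter_upwards [hbound_ae] with x hx
    rw [Real.norm_eq_abs, Real.norm_eq_abs, abs_of_nonneg (hf_nonneg x),
      abs_of_nonneg (hg_nonneg x)]
    exact hx
  -- compute ∫ g
  have hint0 : (∫ x in (0:ℝ)..2, h x) = 2 / (1 - p) := by
    have e1 : (∫ x in (0:ℝ)..2, h x) = ∫ x in (0:ℝ)..2, x ^ (-p) / 2 ^ (-p) := by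
      apply intervalIntegral.integral_congr
      intro x hx
      rw [Set.uIcc_of_le (by norm_num : (0:ℝ) ≤ 2)] at hx
      show (|x| / 2) ^ (-p) = x ^ (-p) / 2 ^ (-p)
      rw [abs_of_nonneg hx.1, Real.div_rpow hx.1 (by norm_num)]
    rw [e1, intervalIntegral.integral_div, integral_rpow (Or.inl (by linarith))]
    rw [Real.zero_rpow (by linarith : -p + 1 ≠ 0), sub_zero]
    have h2 : (2:ℝ) ^ (-p + 1) = 2 ^ (-p) * 2 := by
      rw [Real.rpow_add (by norm_num), Real.rpow_one]
    have h2p : (0:ℝ) < 2 ^ (-p) := Real.rpow_pos_of_pos two_pos _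
    rw [h2, div_div, mul_comm (-p+1) ((2:ℝ) ^ (-p)), mul_div_mul_left _ _ h2p.ne']
    ring_nf
  have hintneg : (∫ x in (-2:ℝ)..0, h x) = ∫ x in (0:ℝ)..2, h x := by
    have := intervalIntegral.integral_comp_neg (a := (0:ℝ)) (b := 2) h
    have heq : (fun x => h (-x)) = h := by funext x; simp [hh, abs_neg]
    rw [heq] at this
    rw [neg_zero] at this
    exact this.symm
  have hg_val : (∫ x : ℝ, g x) = 4 * α / (α - σ) := by
    rw [hg, integral_indicator measurableSet_Ioo, ← integral_Ioc_eq_integral_Ioo,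
      ← intervalIntegral.integral_of_le (by norm_num : (-2:ℝ) ≤ 2),
      ← intervalIntegral.integral_add_adjacent_intervals hIIneg hII,
      hintneg, hint0]
    have hαs : α - σ ≠ 0 := by linarith
    rw [hp]
    field_simp
    ring
  calc (∫ x : ℝ, f x) ≤ ∫ x : ℝ, g x := integral_mono_ae hf_int hg_int hbound_ae
    _ = 4 * α / (α - σ) := hg_val
end

section
/- Let γ ∈ (0,1) and let φ : ℝ³ → ℝ satisfy |φ(x)| ≤ M for every x ∈ ℝ³ and |φ(x) − φ(y)| ≤ K·‖x − y‖ for all x, y ∈ ℝ³, where M, K ∈ (0,∞). Then for every x ∈ ℝ³ the function z ↦ (φ(x+z) − φ(x))·‖z‖^{−(3+γ)} is Lebesgue integrable on ℝ³, and ∫_{ℝ³} |φ(x+z) − φ(x)|·‖z‖^{−(3+γ)} dz ≤ 4π·(1/(1−γ) + 2/γ)·M^{1−γ}·K^γ. -/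
open MeasureTheory Set

noncomputable section

open Metric

lemma radial_lintegral' (g : ℝ → ENNReal) (hg : Measurable g) :
    ∫⁻ x : EuclideanSpace ℝ (Fin 3), g ‖x‖ =
      (volume : Measure (EuclideanSpace ℝ (Fin 3))).toSphere univ *
        ∫⁻ r in Ioi (0:ℝ), ENNReal.ofReal (r ^ 2) * g r := by
  set E := EuclideanSpace ℝ (Fin 3)
  set μ : Measure E := volume with hμ
  have hdim : Module.finrank ℝ E = 3 := finrank_euclideanSpace_fin
  have h0 : ∫⁻ x, g ‖x‖ ∂μ = ∫⁻ x : ({0}ᶜ : Set E), g ‖x.1‖ ∂(μ.comap (↑)) := by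
    rw [lintegral_subtype_comap (measurableSet_singleton (0:E)).compl (fun x => g ‖x‖),
      restrict_compl_singleton]
  have h1 := (μ.measurePreserving_homeomorphUnitSphereProd).lintegral_comp_emb
      (Homeomorph.measurableEmbedding _)
      (fun p : sphere (0:E) 1 × Ioi (0:ℝ) => g p.2)
  simp only [homeomorphUnitSphereProd_apply_snd_coe] at h1
  rw [hdim] at h1
  have hmeas : Measurable (fun p : sphere (0:E) 1 × Ioi (0:ℝ) => g p.2) :=
    hg.comp (measurable_subtype_coe.comp measurable_snd)
  have h2 : ∫⁻ p : sphere (0:E) 1 × Ioi (0:ℝ), g p.2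
        ∂(μ.toSphere.prod (Measure.volumeIoiPow (3 - 1)))
      = μ.toSphere univ * ∫⁻ r : Ioi (0:ℝ), g r ∂(Measure.volumeIoiPow 2) := by
    rw [lintegral_prod _ hmeas.aemeasurable]
    simp [lintegral_const, mul_comm]
  have h3 : ∫⁻ r : Ioi (0:ℝ), g r ∂(Measure.volumeIoiPow 2)
      = ∫⁻ r in Ioi (0:ℝ), ENNReal.ofReal (r ^ 2) * g r ∂(volume : Measure ℝ) := by
    have hwd := lintegral_withDensity_eq_lintegral_mul
      (Measure.comap Subtype.val (volume : Measure ℝ))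
      (f := fun r : Ioi (0:ℝ) => ENNReal.ofReal (r.1 ^ 2))
      ((measurable_subtype_coe.pow_const 2).ennreal_ofReal)
      (g := fun r : Ioi (0:ℝ) => g r.1)
      (hg.comp measurable_subtype_coe)
    rw [Measure.volumeIoiPow, hwd]
    have := lintegral_subtype_comap (μ := (volume : Measure ℝ)) (s := Ioi (0:ℝ))
      measurableSet_Ioi (fun r : ℝ => ENNReal.ofReal (r ^ 2) * g r)
    simpa [Function.comp] using this
  rw [h0, h1, h2, h3]

/-- The pointwise (`L^∞`) case of Lemma 5.1 of the paper: if `φ` is bounded by `M` and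
`K`-Lipschitz, then for every `x` the singular integral defining `Λ_γ φ` converges
absolutely, with `∫ |δ_z φ(x)| ‖z‖^{-(3+γ)} dz ≤ 4π (1/(1-γ) + 2/γ) M^{1-γ} K^γ`. -/
theorem stmt_5 (γ M K : ℝ) (hγ : γ ∈ Set.Ioo (0 : ℝ) 1) (hM : 0 < M) (hK : 0 < K)
    (φ : EuclideanSpace ℝ (Fin 3) → ℝ)
    (hbd : ∀ x, |φ x| ≤ M)
    (hlip : ∀ x y, |φ x - φ y| ≤ K * ‖x - y‖) :
    ∀ x : EuclideanSpace ℝ (Fin 3),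
      Integrable (fun z : EuclideanSpace ℝ (Fin 3) =>
          (φ (x + z) - φ x) * ‖z‖ ^ (-(3 + γ))) ∧
        ∫ z : EuclideanSpace ℝ (Fin 3), |φ (x + z) - φ x| * ‖z‖ ^ (-(3 + γ))
          ≤ 4 * Real.pi * (1 / (1 - γ) + 2 / γ) * M ^ (1 - γ) * K ^ γ := by
  obtain ⟨hγ0, hγ1⟩ := hγ
  have h1γ : (0:ℝ) < 1 - γ := by linarith
  intro x
  set r0 : ℝ := M / K with hr0def
  have hr0 : 0 < r0 := div_pos hM hK
  set F : ℝ → ℝ := fun r => min (2*M) (K*r) * r ^ (-(3+γ)) with hFdef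
  have hFnn : ∀ r : ℝ, 0 ≤ r → 0 ≤ F r := fun r hr =>
    mul_nonneg (le_min (by positivity) (by positivity)) (Real.rpow_nonneg hr _)
  have hFmeas : Measurable F := by
    apply Measurable.mul
    · exact measurable_const.min (measurable_id.const_mul K)
    · fun_prop
  -- pointwise radial bounds
  have hb1 : ∀ r ∈ Ioc (0:ℝ) r0, r ^ 2 * F r ≤ K * r ^ (-γ) := by
    intro r hr
    have hrp : (0:ℝ) < r := hr.1
    have hw : (0:ℝ) ≤ r ^ (-(3+γ)) := Real.rpow_nonneg hrp.le _
    have e : r ^ 2 * ((K*r) * r ^ (-(3+γ))) = K * r ^ (-γ) := by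
      have h3 : (r:ℝ) ^ 2 * r = r ^ ((3:ℕ):ℝ) := by rw [Real.rpow_natCast]; ring
      calc r ^ 2 * ((K*r) * r ^ (-(3+γ))) = K * ((r ^ 2 * r) * r ^ (-(3+γ))) := by ring
        _ = K * (r ^ ((3:ℕ):ℝ) * r ^ (-(3+γ))) := by rw [h3]
        _ = K * r ^ (((3:ℕ):ℝ) + (-(3+γ))) := by rw [← Real.rpow_add hrp]
        _ = K * r ^ (-γ) := by norm_num
    refine le_trans ?_ e.le
    exact mul_le_mul_of_nonneg_left
      (mul_le_mul_of_nonneg_right (min_le_right _ _) hw) (sq_nonneg r)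
  have hb2 : ∀ r ∈ Ioi r0, r ^ 2 * F r ≤ 2*M * r ^ (-(1+γ)) := by
    intro r hr
    have hrp : (0:ℝ) < r := hr0.trans hr
    have hw : (0:ℝ) ≤ r ^ (-(3+γ)) := Real.rpow_nonneg hrp.le _
    have e : r ^ 2 * ((2*M) * r ^ (-(3+γ))) = 2*M * r ^ (-(1+γ)) := by
      have h2' : (r:ℝ) ^ 2 = r ^ ((2:ℕ):ℝ) := by rw [Real.rpow_natCast]
      calc r ^ 2 * ((2*M) * r ^ (-(3+γ))) = 2*M * (r ^ 2 * r ^ (-(3+γ))) := by ring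
        _ = 2*M * (r ^ ((2:ℕ):ℝ) * r ^ (-(3+γ))) := by rw [h2']
        _ = 2*M * r ^ (((2:ℕ):ℝ) + (-(3+γ))) := by rw [← Real.rpow_add hrp]
        _ = 2*M * r ^ (-(1+γ)) := by rw [show ((2:ℕ):ℝ) + (-(3+γ)) = -(1+γ) by push_cast; ring]
    refine le_trans ?_ e.le
    exact mul_le_mul_of_nonneg_left
      (mul_le_mul_of_nonneg_right (min_le_left _ _) hw) (sq_nonneg r)
  -- integrability of the dominating radial functions
  have hIoc : IntegrableOn (fun r : ℝ => K * r ^ (-γ)) (Ioc 0 r0) := by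
    have h := intervalIntegral.intervalIntegrable_rpow' (a := 0) (b := r0)
      (show (-1:ℝ) < -γ by linarith)
    rw [intervalIntegrable_iff_integrableOn_Ioc_of_le hr0.le] at h
    exact h.const_mul K
  have hIoi : IntegrableOn (fun r : ℝ => 2*M * r ^ (-(1+γ))) (Ioi r0) :=
    (integrableOn_Ioi_rpow_of_lt (by linarith) hr0).const_mul _
  have hGmeas : Measurable fun r : ℝ => r ^ 2 * F r := (measurable_id.pow_const 2).mul hFmeas
  have hG1 : IntegrableOn (fun r : ℝ => r ^ 2 * F r) (Ioc 0 r0) := by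
    refine hIoc.mono' hGmeas.aestronglyMeasurable ?_
    filter_upwards [ae_restrict_mem measurableSet_Ioc] with r hr
    rw [Real.norm_eq_abs, abs_of_nonneg (mul_nonneg (sq_nonneg r) (hFnn r hr.1.le))]
    exact hb1 r hr
  have hG2 : IntegrableOn (fun r : ℝ => r ^ 2 * F r) (Ioi r0) := by
    refine hIoi.mono' hGmeas.aestronglyMeasurable ?_
    filter_upwards [ae_restrict_mem measurableSet_Ioi] with r hr
    rw [Real.norm_eq_abs, abs_of_nonneg (mul_nonneg (sq_nonneg r) (hFnn r (hr0.trans hr).le))]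
    exact hb2 r hr
  have hGint : IntegrableOn (fun r : ℝ => r ^ 2 * F r) (Ioi 0) := by
    rw [← Ioc_union_Ioi_eq_Ioi hr0.le]
    exact hG1.union hG2
  -- values of the dominating integrals
  have hIoc_val : ∫ r in Ioc (0:ℝ) r0, K * r ^ (-γ) = K * (r0 ^ (1-γ) / (1-γ)) := by
    rw [MeasureTheory.integral_const_mul]
    congr 1
    rw [← intervalIntegral.integral_of_le hr0.le,
      integral_rpow (Or.inl (show (-1:ℝ) < -γ by linarith)),
      Real.zero_rpow (show -γ + 1 ≠ 0 by linarith),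
      show -γ + 1 = 1 - γ by ring, sub_zero]
  have hIoi_val : ∫ r in Ioi r0, 2*M * r ^ (-(1+γ)) = 2*M * (r0 ^ (-γ) / γ) := by
    rw [MeasureTheory.integral_const_mul,
      integral_Ioi_rpow_of_lt (show -(1+γ) < -1 by linarith) hr0,
      show -(1+γ) + 1 = -γ by ring, neg_div_neg_eq]
  -- constant algebra
  have hKpow : (0:ℝ) < K ^ (1-γ) := Real.rpow_pos_of_pos hK _
  have hKK : K ^ γ * K ^ (1-γ) = K := by
    rw [← Real.rpow_add hK]; norm_num
  have hKdiv : K / K ^ (1-γ) = K ^ γ := by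
    rw [div_eq_iff hKpow.ne']
    exact hKK.symm
  have e1 : K * (r0 ^ (1-γ) / (1-γ)) = 1/(1-γ) * (M ^ (1-γ) * K ^ γ) := by
    rw [hr0def, Real.div_rpow hM.le hK.le]
    calc K * (M ^ (1-γ) / K ^ (1-γ) / (1-γ))
        = M ^ (1-γ) * (K / K ^ (1-γ)) / (1-γ) := by ring
      _ = M ^ (1-γ) * K ^ γ / (1-γ) := by rw [hKdiv]
      _ = 1/(1-γ) * (M ^ (1-γ) * K ^ γ) := by ring
  have e2 : 2*M * (r0 ^ (-γ) / γ) = 2/γ * (M ^ (1-γ) * K ^ γ) := by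
    have hMM : M ^ (1-γ) = M * M ^ (-γ) := by
      rw [show (1-γ) = 1 + (-γ) by ring, Real.rpow_add hM, Real.rpow_one]
    rw [hr0def, Real.div_rpow hM.le hK.le, hMM, Real.rpow_neg hK.le]
    have hKγ : (0:ℝ) < K ^ γ := Real.rpow_pos_of_pos hK _
    field_simp
  have hrad : ∫ r in Ioi (0:ℝ), r ^ 2 * F r ≤ (1/(1-γ) + 2/γ) * (M ^ (1-γ) * K ^ γ) := by
    have hsplit : ∫ r in Ioi (0:ℝ), r ^ 2 * F r
        = (∫ r in Ioc (0:ℝ) r0, r ^ 2 * F r) + ∫ r in Ioi r0, r ^ 2 * F r := by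
      rw [← Ioc_union_Ioi_eq_Ioi hr0.le,
        setIntegral_union (Ioc_disjoint_Ioi le_rfl) measurableSet_Ioi hG1 hG2]
    have t1 : ∫ r in Ioc (0:ℝ) r0, r ^ 2 * F r ≤ K * (r0 ^ (1-γ) / (1-γ)) := by
      rw [← hIoc_val]
      exact setIntegral_mono_on hG1 hIoc measurableSet_Ioc hb1
    have t2 : ∫ r in Ioi r0, r ^ 2 * F r ≤ 2*M * (r0 ^ (-γ) / γ) := by
      rw [← hIoi_val]
      exact setIntegral_mono_on hG2 hIoi measurableSet_Ioi hb2
    rw [hsplit]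
    calc (∫ r in Ioc (0:ℝ) r0, r ^ 2 * F r) + ∫ r in Ioi r0, r ^ 2 * F r
        ≤ K * (r0 ^ (1-γ) / (1-γ)) + 2*M * (r0 ^ (-γ) / γ) := add_le_add t1 t2
      _ = (1/(1-γ) + 2/γ) * (M ^ (1-γ) * K ^ γ) := by rw [e1, e2]; ring
  -- integrability of the radial majorant on space
  have hBint : Integrable (fun z : EuclideanSpace ℝ (Fin 3) => F ‖z‖) := by
    refine ⟨(hFmeas.comp measurable_norm).aestronglyMeasurable, ?_⟩
    rw [HasFiniteIntegral,
      lintegral_enorm_of_nonneg (fun z => hFnn _ (norm_nonneg z))]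
    have hrl := radial_lintegral' (fun r => ENNReal.ofReal (F r)) hFmeas.ennreal_ofReal
    rw [hrl]
    refine ENNReal.mul_lt_top (measure_lt_top _ _) ?_
    have hcg : ∫⁻ r in Ioi (0:ℝ), ENNReal.ofReal (r ^ 2) * ENNReal.ofReal (F r)
        = ∫⁻ r in Ioi (0:ℝ), ENNReal.ofReal (r ^ 2 * F r) := by
      refine lintegral_congr fun r => ?_
      rw [ENNReal.ofReal_mul (sq_nonneg r)]
    rw [hcg]
    exact hGint.setLIntegral_lt_top
  -- the actual integrand
  have hφc : Continuous φ := by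
    have : LipschitzWith (Real.toNNReal K) φ :=
      LipschitzWith.of_dist_le_mul fun a b => by
        rw [Real.dist_eq, dist_eq_norm, Real.coe_toNNReal K hK.le]
        exact hlip a b
    exact this.continuous
  have hfm : AEStronglyMeasurable
      (fun z : EuclideanSpace ℝ (Fin 3) => (φ (x + z) - φ x) * ‖z‖ ^ (-(3+γ))) volume := by
    apply Measurable.aestronglyMeasurable
    apply Measurable.mul
    · exact ((hφc.comp (continuous_const.add continuous_id)).sub continuous_const).measurable
    · fun_prop
  have hptbd : ∀ z : EuclideanSpace ℝ (Fin 3),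
      |φ (x + z) - φ x| * ‖z‖ ^ (-(3+γ)) ≤ F ‖z‖ := by
    intro z
    have h1 : |φ (x + z) - φ x| ≤ min (2*M) (K * ‖z‖) := by
      refine le_min ?_ ?_
      · have ha := abs_sub (φ (x+z)) (φ x)
        have h2 := hbd (x+z); have h3 := hbd x; linarith
      · have := hlip (x+z) x
        rwa [add_sub_cancel_left] at this
    exact mul_le_mul_of_nonneg_right h1 (Real.rpow_nonneg (norm_nonneg z) _)
  have hfi : Integrable (fun z : EuclideanSpace ℝ (Fin 3) =>
      (φ (x + z) - φ x) * ‖z‖ ^ (-(3+γ))) := by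
    refine hBint.mono' hfm (ae_of_all _ fun z => ?_)
    rw [Real.norm_eq_abs, abs_mul, abs_of_nonneg (Real.rpow_nonneg (norm_nonneg z) _)]
    exact hptbd z
  refine ⟨hfi, ?_⟩
  have hstep1 : ∫ z : EuclideanSpace ℝ (Fin 3), |φ (x + z) - φ x| * ‖z‖ ^ (-(3+γ))
      ≤ ∫ z : EuclideanSpace ℝ (Fin 3), F ‖z‖ := by
    refine integral_mono ?_ hBint hptbd
    have habs : (fun z : EuclideanSpace ℝ (Fin 3) => |φ (x + z) - φ x| * ‖z‖ ^ (-(3+γ)))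
        = fun z => |(φ (x + z) - φ x) * ‖z‖ ^ (-(3+γ))| := by
      funext z
      rw [abs_mul, abs_of_nonneg (Real.rpow_nonneg (norm_nonneg z) _)]
    rw [habs]
    exact hfi.abs
  have hpolar := integral_fun_norm_addHaar (volume : Measure (EuclideanSpace ℝ (Fin 3))) F
  rw [finrank_euclideanSpace_fin] at hpolar
  simp only [nsmul_eq_mul, smul_eq_mul, Nat.cast_ofNat] at hpolar
  have hvol : (volume (ball (0:EuclideanSpace ℝ (Fin 3)) 1)).toReal = 4 * Real.pi / 3 := by
    rw [EuclideanSpace.volume_ball]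
    have hΓ32 : Real.Gamma ((3:ℝ)/2) = Real.sqrt Real.pi / 2 := by
      rw [show (3:ℝ)/2 = 1/2 + 1 by norm_num,
        Real.Gamma_add_one (by norm_num : (1:ℝ)/2 ≠ 0), Real.Gamma_one_half_eq]
      ring
    have hΓ : Real.Gamma ((Fintype.card (Fin 3) : ℝ) / 2 + 1)
        = 3/4 * Real.sqrt Real.pi := by
      rw [Fintype.card_fin]
      push_cast
      rw [Real.Gamma_add_one (by norm_num : (3:ℝ)/2 ≠ 0), hΓ32]
      ring
    rw [hΓ]
    have hsp : Real.sqrt Real.pi ^ Fintype.card (Fin 3) = Real.pi * Real.sqrt Real.pi := by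
      rw [Fintype.card_fin, pow_succ, Real.sq_sqrt Real.pi_nonneg]
    rw [hsp]
    have hspne : Real.sqrt Real.pi ≠ 0 := by positivity
    rw [ENNReal.toReal_mul, ENNReal.toReal_pow, ENNReal.toReal_ofReal zero_le_one,
      one_pow, one_mul, ENNReal.toReal_ofReal (by positivity)]
    field_simp
  calc ∫ z : EuclideanSpace ℝ (Fin 3), |φ (x + z) - φ x| * ‖z‖ ^ (-(3+γ))
      ≤ ∫ z : EuclideanSpace ℝ (Fin 3), F ‖z‖ := hstep1
    _ = 3 * ((volume (ball (0:EuclideanSpace ℝ (Fin 3)) 1)).toReal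
          * ∫ r in Ioi (0:ℝ), r ^ 2 * F r) := by
        rw [hpolar]; rfl
    _ = 4 * Real.pi * ∫ r in Ioi (0:ℝ), r ^ 2 * F r := by rw [hvol]; ring
    _ ≤ 4 * Real.pi * ((1/(1-γ) + 2/γ) * (M ^ (1-γ) * K ^ γ)) :=
        mul_le_mul_of_nonneg_left hrad (by positivity)
    _ = 4 * Real.pi * (1 / (1 - γ) + 2 / γ) * M ^ (1 - γ) * K ^ γ := by ring

end
end

section
/- Let γ ∈ (0,1), let p ∈ (2,∞) and set p* = 2p/(p−2). Let u, φ : ℝ³ → ℝ be measurable with ‖u‖_{L^p(ℝ³)} ≤ U, ‖φ‖_{L^{p*}(ℝ³)} ≤ A, and ‖φ(·+z) − φ(·)‖_{L^{p*}(ℝ³)} ≤ B·‖z‖ for every z ∈ ℝ³, where U, A, B ∈ (0,∞). Then for almost every x ∈ ℝ³ the function z ↦ (u(x+z) − u(x))·(φ(x+z) − φ(x))·‖z‖^{−(3+γ)} is Lebesgue integrable on ℝ³, and the function x ↦ ∫_{ℝ³} (u(x+z) − u(x))·(φ(x+z) − φ(x))·‖z‖^{−(3+γ)} dz has L²(ℝ³)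 norm at most 8π·(1/(1−γ) + 2/γ)·U·A^{1−γ}·B^γ. -/
open MeasureTheory Set
open MeasureTheory Measure Set Metric ENNReal

lemma aux_lintegral_fun_norm_addHaar {E : Type*} [NormedAddCommGroup E] [NormedSpace ℝ E]
    [MeasurableSpace E] [BorelSpace E] [Nontrivial E] [FiniteDimensional ℝ E]
    (μ : Measure E) [μ.IsAddHaarMeasure] {f : ℝ → ℝ≥0∞} (hf : Measurable f) :
    ∫⁻ x, f ‖x‖ ∂μ = (Module.finrank ℝ E) * μ (ball 0 1) *
      ∫⁻ y in Ioi (0:ℝ), ENNReal.ofReal (y ^ (Module.finrank ℝ E - 1)) * f y := by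
  have hmeas : Measurable fun p : sphere (0:E) 1 × Ioi (0:ℝ) => f p.2 :=
    (hf.comp measurable_subtype_coe).comp measurable_snd
  calc ∫⁻ x, f ‖x‖ ∂μ
      = ∫⁻ x in ({0}ᶜ : Set E), f ‖x‖ ∂μ := by rw [restrict_compl_singleton]
    _ = ∫⁻ x : ({0}ᶜ : Set E), f ‖x.1‖ ∂(μ.comap (↑)) :=
        (lintegral_subtype_comap (measurableSet_singleton 0).compl _).symm
    _ = ∫⁻ p : sphere (0:E) 1 × Ioi (0:ℝ),
          f p.2 ∂(μ.toSphere.prod (volumeIoiPow (Module.finrank ℝ E - 1))) := by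
        rw [← (μ.measurePreserving_homeomorphUnitSphereProd).lintegral_comp
          (f := fun p : sphere (0:E) 1 × Ioi (0:ℝ) => f p.2) hmeas]
        simp
    _ = μ.toSphere univ * ∫⁻ r : Ioi (0:ℝ), f r ∂(volumeIoiPow (Module.finrank ℝ E - 1)) := by
        rw [lintegral_prod _ hmeas.aemeasurable]
        simp [lintegral_const, mul_comm]
    _ = (Module.finrank ℝ E) * μ (ball 0 1) *
          ∫⁻ y in Ioi (0:ℝ), ENNReal.ofReal (y ^ (Module.finrank ℝ E - 1)) * f y := by
        rw [μ.toSphere_apply_univ, Measure.volumeIoiPow,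
          lintegral_withDensity_eq_lintegral_mul _
            (by fun_prop) (g := fun r : Ioi (0:ℝ) => f r.1) (by fun_prop),
          ← lintegral_subtype_comap measurableSet_Ioi
            (fun y : ℝ => ENNReal.ofReal (y ^ (Module.finrank ℝ E - 1)) * f y)]
        rfl

lemma aux_polar3 {f : ℝ → ℝ≥0∞} (hf : Measurable f) :
    ∫⁻ z : EuclideanSpace ℝ (Fin 3), f ‖z‖ =
      ENNReal.ofReal (4 * Real.pi) * ∫⁻ y in Ioi (0:ℝ), ENNReal.ofReal (y ^ 2) * f y := by
  rw [aux_lintegral_fun_norm_addHaar volume hf]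
  have h3 : Module.finrank ℝ (EuclideanSpace ℝ (Fin 3)) = 3 := by
    simp [finrank_euclideanSpace]
  rw [h3]
  have hball : (volume (ball (0 : EuclideanSpace ℝ (Fin 3)) 1)) =
      ENNReal.ofReal (4 / 3 * Real.pi) := by
    rw [EuclideanSpace.volume_ball]
    have hs : Real.sqrt Real.pi ^ 2 = Real.pi := Real.sq_sqrt Real.pi_nonneg
    have hΓ : Real.Gamma ((Fintype.card (Fin 3) : ℝ) / 2 + 1) = 3 / 4 * Real.sqrt Real.pi := by
      simp only [Fintype.card_fin]
      have : ((3:ℕ) : ℝ) / 2 + 1 = (1/2 + 1) + 1 := by norm_num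
      rw [this, Real.Gamma_add_one (by norm_num), Real.Gamma_add_one (by norm_num),
        Real.Gamma_one_half_eq]
      ring
    rw [hΓ]
    have hspos : 0 < Real.sqrt Real.pi := Real.sqrt_pos.2 Real.pi_pos
    have : Real.sqrt Real.pi ^ Fintype.card (Fin 3) / (3 / 4 * Real.sqrt Real.pi)
        = 4 / 3 * Real.pi := by
      simp only [Fintype.card_fin]
      field_simp
      nlinarith [hs, hspos]
    rw [this]
    simp
  rw [hball]
  have : ((3:ℕ) : ℝ≥0∞) * ENNReal.ofReal (4 / 3 * Real.pi) = ENNReal.ofReal (4 * Real.pi) := by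
    rw [show ((3:ℕ) : ℝ≥0∞) = ENNReal.ofReal 3 by simp, ← ENNReal.ofReal_mul (by norm_num),
      show (3:ℝ) * (4 / 3 * Real.pi) = 4 * Real.pi by ring]
  rw [this]

lemma aux_minkowski2 {α β : Type*} [MeasurableSpace α] [MeasurableSpace β]
    {μ : Measure α} {ν : Measure β} [SigmaFinite μ] [SigmaFinite ν]
    {G : α → β → ℝ≥0∞} (hG : Measurable (Function.uncurry G)) :
    (∫⁻ x, (∫⁻ z, G x z ∂ν) ^ (2:ℝ) ∂μ) ^ (1/2:ℝ)
      ≤ ∫⁻ z, (∫⁻ x, (G x z) ^ (2:ℝ) ∂μ) ^ (1/2:ℝ) ∂ν := by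
  set S : β → ℝ≥0∞ := fun z => (∫⁻ x, (G x z) ^ (2:ℝ) ∂μ) ^ (1/2:ℝ) with hS
  have hGx : ∀ x, Measurable (G x) := fun x => hG.comp (measurable_prodMk_left)
  have hGz : ∀ z, Measurable (fun x => G x z) := fun z => hG.comp (measurable_prodMk_right)
  have h2 : Measurable (Function.uncurry fun x z => (G x z) ^ (2:ℝ)) := by
    exact hG.pow_const _
  have hSm : Measurable S := h2.lintegral_prod_left.pow_const _
  have key : (∫⁻ x, (∫⁻ z, G x z ∂ν) ^ (2:ℝ) ∂μ) ≤ (∫⁻ z, S z ∂ν) ^ (2:ℝ) := by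
    have expand : ∀ x, (∫⁻ z, G x z ∂ν) ^ (2:ℝ)
        = ∫⁻ z, ∫⁻ w, G x z * G x w ∂ν ∂ν := by
      intro x
      rw [ENNReal.rpow_two, sq]
      rw [← lintegral_mul_const _ (hGx x)]
      congr 1; funext z
      rw [← lintegral_const_mul _ (hGx x)]
    have hinner : Measurable (fun q : α × β => ∫⁻ w, G q.1 q.2 * G q.1 w ∂ν) :=
      Measurable.lintegral_prod_right' (f := fun r : (α × β) × β => G r.1.1 r.1.2 * G r.1.1 r.2)
        ((hG.comp measurable_fst).mul
          (hG.comp ((measurable_fst.comp measurable_fst).prodMk measurable_snd)))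
    calc (∫⁻ x, (∫⁻ z, G x z ∂ν) ^ (2:ℝ) ∂μ)
        = ∫⁻ x, ∫⁻ z, ∫⁻ w, G x z * G x w ∂ν ∂ν ∂μ := lintegral_congr expand
      _ = ∫⁻ z, ∫⁻ x, ∫⁻ w, G x z * G x w ∂ν ∂μ ∂ν := by
          apply lintegral_lintegral_swap
          exact hinner.aemeasurable
      _ = ∫⁻ z, ∫⁻ w, ∫⁻ x, G x z * G x w ∂μ ∂ν ∂ν := by
          refine lintegral_congr fun z => ?_
          apply lintegral_lintegral_swap
          exact (((hGz z).comp measurable_fst).mul hG).aemeasurable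
      _ ≤ ∫⁻ z, ∫⁻ w, S z * S w ∂ν ∂ν := by
          refine lintegral_mono fun z => lintegral_mono fun w => ?_
          have hconj : Real.HolderConjugate 2 2 := ⟨by norm_num, by norm_num, by norm_num⟩
          have := ENNReal.lintegral_mul_le_Lp_mul_Lq μ hconj
            (hGz z).aemeasurable (hGz w).aemeasurable
          simpa [hS, Pi.mul_apply] using this
      _ = (∫⁻ z, S z ∂ν) ^ (2:ℝ) := by
          rw [ENNReal.rpow_two, sq]
          rw [← lintegral_mul_const _ hSm]
          congr 1; funext z
          rw [← lintegral_const_mul _ hSm]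
  calc (∫⁻ x, (∫⁻ z, G x z ∂ν) ^ (2:ℝ) ∂μ) ^ (1/2:ℝ)
      ≤ ((∫⁻ z, S z ∂ν) ^ (2:ℝ)) ^ (1/2:ℝ) := ENNReal.rpow_le_rpow key (by norm_num)
    _ = ∫⁻ z, S z ∂ν := by
        rw [← ENNReal.rpow_mul]; norm_num

lemma aux_radial {γ A B : ℝ} (hγ0 : 0 < γ) (hγ1 : γ < 1) (hA : 0 < A) (hB : 0 < B) :
    ∫⁻ y in Ioi (0:ℝ),
        ENNReal.ofReal (y ^ 2) * ENNReal.ofReal (y ^ (-(3+γ)) * min (2*A) (B*y))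
      ≤ ENNReal.ofReal ((1/(1-γ) + 2/γ) * A ^ (1-γ) * B ^ γ) := by
  set R : ℝ := A / B with hR
  have hRpos : 0 < R := div_pos hA hB
  have h1γ : (0:ℝ) < 1 - γ := by linarith
  rw [← Ioc_union_Ioi_eq_Ioi hRpos.le,
    lintegral_union measurableSet_Ioi (Ioc_disjoint_Ioi le_rfl)]
  have bound1 : ∫⁻ y in Ioc (0:ℝ) R,
      ENNReal.ofReal (y ^ 2) * ENNReal.ofReal (y ^ (-(3+γ)) * min (2*A) (B*y))
      ≤ ENNReal.ofReal (1/(1-γ) * A ^ (1-γ) * B ^ γ) := by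
    have hle : ∀ y ∈ Ioc (0:ℝ) R,
        ENNReal.ofReal (y ^ 2) * ENNReal.ofReal (y ^ (-(3+γ)) * min (2*A) (B*y))
          ≤ ENNReal.ofReal (B * y ^ (-γ)) := by
      intro y hy
      rw [← ENNReal.ofReal_mul (by positivity)]
      apply ENNReal.ofReal_le_ofReal
      have hy0 := hy.1
      have h1 : y ^ 2 * (y ^ (-(3+γ)) * min (2*A) (B*y)) ≤ y ^ 2 * (y ^ (-(3+γ)) * (B*y)) := by
        have h0 : (0:ℝ) ≤ y ^ 2 * y ^ (-(3+γ)) := by positivity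
        have := min_le_right (2*A) (B*y)
        nlinarith
      refine h1.trans_eq ?_
      rw [show (y:ℝ) ^ 2 * (y ^ (-(3+γ)) * (B * y)) = B * (y ^ (2:ℕ) * y ^ (-(3+γ)) * y) by ring]
      rw [← Real.rpow_natCast y 2, ← Real.rpow_add hy0]
      nth_rewrite 2 [← Real.rpow_one y]
      rw [← Real.rpow_add hy0]
      congr 2
      push_cast; ring
    calc ∫⁻ y in Ioc (0:ℝ) R,
          ENNReal.ofReal (y ^ 2) * ENNReal.ofReal (y ^ (-(3+γ)) * min (2*A) (B*y))
        ≤ ∫⁻ y in Ioc (0:ℝ) R, ENNReal.ofReal (B * y ^ (-γ)) :=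
          setLIntegral_mono (by fun_prop) hle
      _ = ENNReal.ofReal (∫ y in Ioc (0:ℝ) R, B * y ^ (-γ)) := by
          rw [ofReal_integral_eq_lintegral_ofReal]
          · apply Integrable.const_mul
            rw [← IntegrableOn, ← intervalIntegrable_iff_integrableOn_Ioc_of_le hRpos.le]
            exact intervalIntegral.intervalIntegrable_rpow' (by linarith)
          · filter_upwards [ae_restrict_mem measurableSet_Ioc] with y hy
            have := hy.1
            positivity
      _ ≤ ENNReal.ofReal (1/(1-γ) * A ^ (1-γ) * B ^ γ) := by
          apply ENNReal.ofReal_le_ofReal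
          rw [MeasureTheory.integral_const_mul, ← intervalIntegral.integral_of_le hRpos.le,
            integral_rpow (Or.inl (by linarith)),
            Real.zero_rpow (by intro h; linarith), hR, Real.div_rpow hA.le hB.le,
            show -γ + 1 = 1 - γ by ring]
          have hsplit : B ^ γ * B ^ (1-γ) = B := by
            rw [← Real.rpow_add hB]; norm_num
          have hBpow : (0:ℝ) < B ^ (1-γ) := Real.rpow_pos_of_pos hB _
          have h : B * (A ^ (1-γ)/B^(1-γ)) = A ^ (1-γ) * B ^ γ := by
            nth_rewrite 1 [← hsplit]; field_simp [ne_of_gt hBpow]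
          rw [sub_zero, ← mul_div_assoc, h]
          rw [show 1/(1-γ) * A ^ (1-γ) * B ^ γ = A ^ (1-γ) * B ^ γ / (1-γ) by ring]
  have bound2 : ∫⁻ y in Ioi R,
      ENNReal.ofReal (y ^ 2) * ENNReal.ofReal (y ^ (-(3+γ)) * min (2*A) (B*y))
      ≤ ENNReal.ofReal (2/γ * A ^ (1-γ) * B ^ γ) := by
    have hle : ∀ y ∈ Ioi R,
        ENNReal.ofReal (y ^ 2) * ENNReal.ofReal (y ^ (-(3+γ)) * min (2*A) (B*y))
          ≤ ENNReal.ofReal (2*A * y ^ (-(1+γ))) := by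
      intro y hy
      have hy0 : (0:ℝ) < y := hRpos.trans hy
      rw [← ENNReal.ofReal_mul (by positivity)]
      apply ENNReal.ofReal_le_ofReal
      have h1 : y ^ 2 * (y ^ (-(3+γ)) * min (2*A) (B*y)) ≤ y ^ 2 * (y ^ (-(3+γ)) * (2*A)) := by
        have h0 : (0:ℝ) ≤ y ^ 2 * y ^ (-(3+γ)) := by positivity
        have := min_le_left (2*A) (B*y)
        nlinarith
      refine h1.trans_eq ?_
      rw [show (y:ℝ) ^ 2 * (y ^ (-(3+γ)) * (2*A)) = 2*A * (y ^ (2:ℕ) * y ^ (-(3+γ))) by ring]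
      rw [← Real.rpow_natCast y 2, ← Real.rpow_add hy0]
      congr 2
      push_cast; ring
    calc ∫⁻ y in Ioi R,
          ENNReal.ofReal (y ^ 2) * ENNReal.ofReal (y ^ (-(3+γ)) * min (2*A) (B*y))
        ≤ ∫⁻ y in Ioi R, ENNReal.ofReal (2*A * y ^ (-(1+γ))) :=
          setLIntegral_mono (by fun_prop) hle
      _ = ENNReal.ofReal (∫ y in Ioi R, 2*A * y ^ (-(1+γ))) := by
          rw [ofReal_integral_eq_lintegral_ofReal]
          · exact (integrableOn_Ioi_rpow_of_lt (by linarith) hRpos).const_mul _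
          · filter_upwards [ae_restrict_mem measurableSet_Ioi] with y hy
            have : (0:ℝ) < y := hRpos.trans hy
            positivity
      _ ≤ ENNReal.ofReal (2/γ * A ^ (1-γ) * B ^ γ) := by
          apply ENNReal.ofReal_le_ofReal
          rw [MeasureTheory.integral_const_mul,
            integral_Ioi_rpow_of_lt (by linarith) hRpos, hR]
          have e1 : -(1+γ) + 1 = -γ := by ring
          have hAγ : (0:ℝ) < A ^ γ := Real.rpow_pos_of_pos hA _
          have hAd : A / A ^ γ = A ^ (1-γ) := by
            rw [Real.rpow_sub hA, Real.rpow_one]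
          have key : (A/B) ^ (-γ) = B ^ γ / A ^ γ := by
            rw [Real.div_rpow hA.le hB.le, Real.rpow_neg hA.le, Real.rpow_neg hB.le, inv_div_inv]
          rw [e1, neg_div_neg_eq, key, ← hAd]
          rw [show 2*A*(B ^ γ / A ^ γ / γ) = 2/γ * (A / A ^ γ) * B ^ γ by field_simp]
  calc _ ≤ ENNReal.ofReal (1/(1-γ) * A ^ (1-γ) * B ^ γ)
        + ENNReal.ofReal (2/γ * A ^ (1-γ) * B ^ γ) := add_le_add bound1 bound2
    _ = ENNReal.ofReal ((1/(1-γ) + 2/γ) * A ^ (1-γ) * B ^ γ) := by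
        rw [← ENNReal.ofReal_add (by positivity) (by positivity)]
        ring_nf

noncomputable def auxF (γ : ℝ) (u φ : EuclideanSpace ℝ (Fin 3) → ℝ)
    (x z : EuclideanSpace ℝ (Fin 3)) : ℝ :=
  (u (x + z) - u x) * (φ (x + z) - φ x) * ‖z‖ ^ (-(3 + γ))

set_option maxHeartbeats 1000000 in
/-- The commutator estimate (Lemma 5.2 of the paper) in singular-integral form:
with `p* = 2p/(p-2)`, `‖u‖_{L^p} ≤ U`, `‖φ‖_{L^{p*}} ≤ A`, `‖δ_z φ‖_{L^{p*}} ≤ B ‖z‖`,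
the function `x ↦ ∫ δ_z u(x) δ_z φ(x) ‖z‖^{-(3+γ)} dz` is defined a.e. and its `L²` norm
is at most `8π (1/(1-γ) + 2/γ) U A^{1-γ} B^γ`. -/
theorem stmt_6 (γ p U A B : ℝ) (hγ : γ ∈ Set.Ioo (0 : ℝ) 1) (hp : 2 < p)
    (u φ : EuclideanSpace ℝ (Fin 3) → ℝ) (hu : Measurable u) (hφ : Measurable φ)
    (hU : 0 < U) (hA : 0 < A) (hB : 0 < B)
    (huU : eLpNorm u (ENNReal.ofReal p) volume ≤ ENNReal.ofReal U)
    (hφA : eLpNorm φ (ENNReal.ofReal (2 * p / (p - 2))) volume ≤ ENNReal.ofReal A)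
    (hφB : ∀ z : EuclideanSpace ℝ (Fin 3),
      eLpNorm (fun x => φ (x + z) - φ x) (ENNReal.ofReal (2 * p / (p - 2))) volume
        ≤ ENNReal.ofReal (B * ‖z‖)) :
    (∀ᵐ x : EuclideanSpace ℝ (Fin 3),
        Integrable (fun z : EuclideanSpace ℝ (Fin 3) =>
          (u (x + z) - u x) * (φ (x + z) - φ x) * ‖z‖ ^ (-(3 + γ)))) ∧
      eLpNorm (fun x : EuclideanSpace ℝ (Fin 3) =>
          ∫ z : EuclideanSpace ℝ (Fin 3),
            (u (x + z) - u x) * (φ (x + z) - φ x) * ‖z‖ ^ (-(3 + γ)))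
        2 volume
      ≤ ENNReal.ofReal
          (8 * Real.pi * (1 / (1 - γ) + 2 / γ) * U * A ^ (1 - γ) * B ^ γ) := by
  obtain ⟨hγ0, hγ1⟩ := hγ
  have hppos : (0:ℝ) < p := by linarith
  have hps : (0:ℝ) < 2 * p / (p - 2) := by
    apply div_pos (by linarith) (by linarith)
  suffices h : (∀ᵐ x : EuclideanSpace ℝ (Fin 3),
        Integrable (fun z => auxF γ u φ x z)) ∧
      eLpNorm (fun x : EuclideanSpace ℝ (Fin 3) => ∫ z, auxF γ u φ x z) 2 volume
      ≤ ENNReal.ofReal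
          (8 * Real.pi * (1 / (1 - γ) + 2 / γ) * U * A ^ (1 - γ) * B ^ γ) by
    exact h
  set F : EuclideanSpace ℝ (Fin 3) → EuclideanSpace ℝ (Fin 3) → ℝ := auxF γ u φ with hFdef
  have hF : Measurable (Function.uncurry F) := by
    rw [hFdef]
    have : Function.uncurry (auxF γ u φ) = fun q : (EuclideanSpace ℝ (Fin 3)) × (EuclideanSpace ℝ (Fin 3)) =>
        (u (q.1 + q.2) - u q.1) * (φ (q.1 + q.2) - φ q.1) * ‖q.2‖ ^ (-(3 + γ)) := rfl
    rw [this]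
    fun_prop
  set G : EuclideanSpace ℝ (Fin 3) → EuclideanSpace ℝ (Fin 3) → ℝ≥0∞ :=
    fun x z => (‖F x z‖₊ : ℝ≥0∞) with hGdef
  have hGm : Measurable (Function.uncurry G) := hF.enorm
  -- translation invariance
  have htr : ∀ (f : EuclideanSpace ℝ (Fin 3) → ℝ), Measurable f → ∀ (r : ℝ≥0∞)
      (z : EuclideanSpace ℝ (Fin 3)),
      eLpNorm (fun x => f (x + z)) r volume = eLpNorm f r volume := fun f hf r z =>
    eLpNorm_comp_measurePreserving hf.aestronglyMeasurable
      (measurePreserving_add_right volume z)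
  -- difference bounds
  have hδu : ∀ z : EuclideanSpace ℝ (Fin 3),
      eLpNorm (fun x => u (x + z) - u x) (ENNReal.ofReal p) volume
      ≤ ENNReal.ofReal (2 * U) := by
    intro z
    calc eLpNorm (fun x => u (x + z) - u x) (ENNReal.ofReal p) volume
        ≤ eLpNorm (fun x => u (x + z)) (ENNReal.ofReal p) volume
          + eLpNorm u (ENNReal.ofReal p) volume :=
          eLpNorm_sub_le ((by fun_prop : Measurable fun x => u (x + z)).aestronglyMeasurable)
            hu.aestronglyMeasurable (ENNReal.one_le_ofReal.mpr (by linarith))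
      _ = eLpNorm u (ENNReal.ofReal p) volume + eLpNorm u (ENNReal.ofReal p) volume := by
          rw [htr u hu _ z]
      _ ≤ ENNReal.ofReal U + ENNReal.ofReal U := add_le_add huU huU
      _ = ENNReal.ofReal (2 * U) := by
          rw [← ENNReal.ofReal_add hU.le hU.le]; norm_num [two_mul]
  have hδφ : ∀ z : EuclideanSpace ℝ (Fin 3),
      eLpNorm (fun x => φ (x + z) - φ x) (ENNReal.ofReal (2 * p / (p - 2))) volume
      ≤ ENNReal.ofReal (min (2 * A) (B * ‖z‖)) := by
    intro z
    rcases le_total (2 * A) (B * ‖z‖) with h | h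
    · rw [min_eq_left h]
      calc eLpNorm (fun x => φ (x + z) - φ x) (ENNReal.ofReal (2 * p / (p - 2))) volume
          ≤ eLpNorm (fun x => φ (x + z)) (ENNReal.ofReal (2 * p / (p - 2))) volume
            + eLpNorm φ (ENNReal.ofReal (2 * p / (p - 2))) volume :=
            eLpNorm_sub_le ((by fun_prop : Measurable fun x => φ (x + z)).aestronglyMeasurable)
              hφ.aestronglyMeasurable (ENNReal.one_le_ofReal.mpr (by
                rw [le_div_iff₀ (by linarith)]; linarith))
        _ = eLpNorm φ (ENNReal.ofReal (2 * p / (p - 2))) volume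
            + eLpNorm φ (ENNReal.ofReal (2 * p / (p - 2))) volume := by rw [htr φ hφ _ z]
        _ ≤ ENNReal.ofReal A + ENNReal.ofReal A := add_le_add hφA hφA
        _ = ENNReal.ofReal (2 * A) := by
            rw [← ENNReal.ofReal_add hA.le hA.le]; norm_num [two_mul]
    · rw [min_eq_right h]; exact hφB z
  -- Hölder exponent identity
  have hpqr : (1:ℝ≥0∞)/2 = 1/(ENNReal.ofReal (2 * p / (p - 2))) + 1/(ENNReal.ofReal p) := by
    rw [one_div, one_div, one_div, ← ENNReal.ofReal_inv_of_pos hps,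
      ← ENNReal.ofReal_inv_of_pos hppos,
      show (2:ℝ≥0∞) = ENNReal.ofReal 2 by simp [ENNReal.ofReal_ofNat],
      ← ENNReal.ofReal_inv_of_pos two_pos,
      ← ENNReal.ofReal_add (by positivity) (by positivity)]
    congr 1
    field_simp
    ring
  -- Per-z L² bound
  have hcz : ∀ z : EuclideanSpace ℝ (Fin 3), eLpNorm (fun x => F x z) 2 volume
      ≤ ENNReal.ofReal (2 * U) * ENNReal.ofReal (‖z‖ ^ (-(3 + γ)) * min (2 * A) (B * ‖z‖)) := by
    intro z
    set φd : EuclideanSpace ℝ (Fin 3) → ℝ := fun x => φ (x + z) - φ x with hφd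
    set ud : EuclideanSpace ℝ (Fin 3) → ℝ := fun x => u (x + z) - u x with hud
    have hφdm : Measurable φd := by rw [hφd]; fun_prop
    have hudm : Measurable ud := by rw [hud]; fun_prop
    have heq : (fun x => F x z) = (‖z‖ ^ (-(3 + γ))) • (φd • ud) := by
      funext x
      simp only [hφd, hud, hFdef, auxF, Pi.smul_apply, Pi.mul_apply, smul_eq_mul]
      ring
    have hHol : eLpNorm (φd • ud) 2 volume
        ≤ eLpNorm φd (ENNReal.ofReal (2 * p / (p - 2))) volume
          * eLpNorm ud (ENNReal.ofReal p) volume :=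
      eLpNorm_smul_le_mul_eLpNorm hudm.aestronglyMeasurable hφdm.aestronglyMeasurable
          (hpqr := ⟨by simpa only [one_div] using hpqr.symm⟩)
    calc eLpNorm (fun x => F x z) 2 volume
        = (‖(‖z‖ ^ (-(3 + γ)) : ℝ)‖₊ : ℝ≥0∞) * eLpNorm (φd • ud) 2 volume := by
          rw [heq, eLpNorm_const_smul]; rfl
      _ = ENNReal.ofReal (‖z‖ ^ (-(3 + γ))) * eLpNorm (φd • ud) 2 volume := by
          rw [← enorm_eq_nnnorm, Real.enorm_eq_ofReal (by positivity)]
      _ ≤ ENNReal.ofReal (‖z‖ ^ (-(3 + γ)))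
            * (ENNReal.ofReal (min (2 * A) (B * ‖z‖)) * ENNReal.ofReal (2 * U)) :=
          mul_le_mul_right (hHol.trans (mul_le_mul' (hδφ z) (hδu z))) _
      _ = ENNReal.ofReal (2 * U)
            * ENNReal.ofReal (‖z‖ ^ (-(3 + γ)) * min (2 * A) (B * ‖z‖)) := by
          rw [← ENNReal.ofReal_mul (by positivity), ← ENNReal.ofReal_mul (by positivity),
            ← ENNReal.ofReal_mul (by positivity)]
          congr 1; ring
  -- convert to lintegral form
  have hT : ∀ z : EuclideanSpace ℝ (Fin 3), (∫⁻ x, G x z ^ (2:ℝ)) ^ (1/2:ℝ)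
      ≤ ENNReal.ofReal (2 * U) * ENNReal.ofReal (‖z‖ ^ (-(3 + γ)) * min (2 * A) (B * ‖z‖)) := by
    intro z
    have he : eLpNorm (fun x => F x z) 2 volume = (∫⁻ x, G x z ^ (2:ℝ)) ^ (1/2:ℝ) := by
      rw [eLpNorm_eq_lintegral_rpow_enorm_toReal two_ne_zero ENNReal.ofNat_ne_top]
      norm_num; rfl
    rw [← he]; exact hcz z
  -- integrate the bound
  have hgm : Measurable fun r : ℝ =>
      ENNReal.ofReal (r ^ (-(3 + γ)) * min (2 * A) (B * r)) := by fun_prop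
  have hK : ∫⁻ z, (∫⁻ x, G x z ^ (2:ℝ)) ^ (1/2:ℝ)
      ≤ ENNReal.ofReal (8 * Real.pi * (1 / (1 - γ) + 2 / γ) * U * A ^ (1 - γ) * B ^ γ) := by
    calc ∫⁻ z, (∫⁻ x, G x z ^ (2:ℝ)) ^ (1/2:ℝ)
        ≤ ∫⁻ z : EuclideanSpace ℝ (Fin 3), ENNReal.ofReal (2 * U)
            * ENNReal.ofReal (‖z‖ ^ (-(3 + γ)) * min (2 * A) (B * ‖z‖)) :=
          lintegral_mono hT
      _ = ENNReal.ofReal (2 * U)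
            * ∫⁻ z : EuclideanSpace ℝ (Fin 3),
                ENNReal.ofReal (‖z‖ ^ (-(3 + γ)) * min (2 * A) (B * ‖z‖)) :=
          lintegral_const_mul _ (hgm.comp measurable_norm)
      _ = ENNReal.ofReal (2 * U) * (ENNReal.ofReal (4 * Real.pi)
            * ∫⁻ y in Ioi (0:ℝ),
              ENNReal.ofReal (y ^ 2) * ENNReal.ofReal (y ^ (-(3 + γ)) * min (2 * A) (B * y))) := by
          rw [aux_polar3 hgm]
      _ ≤ ENNReal.ofReal (2 * U) * (ENNReal.ofReal (4 * Real.pi)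
            * ENNReal.ofReal ((1/(1-γ) + 2/γ) * A ^ (1-γ) * B ^ γ)) := by
          gcongr
          exact aux_radial hγ0 hγ1 hA hB
      _ = ENNReal.ofReal (8 * Real.pi * (1 / (1 - γ) + 2 / γ) * U * A ^ (1 - γ) * B ^ γ) := by
          rw [← ENNReal.ofReal_mul (by positivity), ← ENNReal.ofReal_mul (by positivity)]
          congr 1; ring
  have hmink := aux_minkowski2 (μ := (volume : Measure (EuclideanSpace ℝ (Fin 3))))
    (ν := (volume : Measure (EuclideanSpace ℝ (Fin 3)))) hGm
  have hchain := hmink.trans hK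
  -- a.e. finiteness
  have hfin : ∀ᵐ x : EuclideanSpace ℝ (Fin 3), (∫⁻ z, G x z) < ⊤ := by
    have h1 : (∫⁻ x, (∫⁻ z, G x z) ^ (2:ℝ)) ≠ ⊤ := by
      intro htop
      have h2 : ((∫⁻ x, (∫⁻ z, G x z) ^ (2:ℝ)) : ℝ≥0∞) ^ (1/2:ℝ) = ⊤ := by
        rw [htop, ENNReal.top_rpow_of_pos (by norm_num)]
      rw [h2] at hchain
      exact ENNReal.ofReal_ne_top (top_le_iff.mp hchain)
    have h2 : ∀ᵐ x : EuclideanSpace ℝ (Fin 3), (∫⁻ z, G x z) ^ (2:ℝ) < ⊤ :=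
      ae_lt_top ((hGm.lintegral_prod_right).pow_const _) h1
    filter_upwards [h2] with x hx
    by_contra h
    rw [not_lt, top_le_iff] at h
    rw [h, ENNReal.top_rpow_of_pos (by norm_num)] at hx
    exact (lt_irrefl _) hx
  constructor
  · filter_upwards [hfin] with x hx
    exact ⟨(hF.comp measurable_prodMk_left).aestronglyMeasurable, hx⟩
  · rw [eLpNorm_eq_lintegral_rpow_enorm_toReal two_ne_zero ENNReal.ofNat_ne_top]
    calc (∫⁻ x, (‖∫ z, F x z‖₊ : ℝ≥0∞) ^ ((2:ℝ≥0∞)).toReal) ^ (1/(2:ℝ≥0∞).toReal)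
        ≤ (∫⁻ x, (∫⁻ z, G x z) ^ (2:ℝ)) ^ (1/2:ℝ) := by
          rw [show ((2:ℝ≥0∞)).toReal = (2:ℝ) by norm_num]
          refine ENNReal.rpow_le_rpow ?_ (by norm_num : (0:ℝ) ≤ 1/2)
          refine lintegral_mono fun x => ENNReal.rpow_le_rpow
            (enorm_integral_le_lintegral_enorm _) (by norm_num : (0:ℝ) ≤ 2)
      _ ≤ _ := hchain
end

section
/- Let γ ∈ (0,1). Let u : ℝ³ → ℝ be measurable with ‖u‖_{L²(ℝ³)} ≤ U, and let φ : ℝ³ → ℝ satisfy |φ(x)| ≤ M for every x and |φ(x) − φ(y)| ≤ K·‖x − y‖ for all x, y, where U, M, K ∈ (0,∞). Then for almost every x ∈ ℝ³ the function z ↦ (u(x+z) − u(x))·(φ(x+z) − φ(x))·‖z‖^{−(3+γ)} is Lebesgue integrable on ℝ³, and the function x ↦ ∫_{ℝ³} (u(x+z) − u(x))·(φ(x+z) − φ(x))·‖z‖^{−(3+γ)} dz has L²(ℝ³) norm at most 8π·(1/(1−γ) + 2/γ)·U·M^{1−γ}·K^γ. -/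
open MeasureTheory Set Metric ENNReal

local notation "E3" => EuclideanSpace ℝ (Fin 3)



lemma lintegral_radial (g : ℝ → ℝ≥0∞) (hg : Measurable g) :
    ∫⁻ x : E3, g ‖x‖ = (volume : Measure E3).toSphere univ *
      ∫⁻ r in Ioi (0:ℝ), ENNReal.ofReal (r ^ 2) * g r := by
  have hdim : Module.finrank ℝ E3 = 3 := by simp [finrank_euclideanSpace]
  calc ∫⁻ x : E3, g ‖x‖
      = ∫⁻ x in ({0}ᶜ : Set E3), g ‖x‖ := by
        rw [restrict_compl_singleton]
    _ = ∫⁻ x : ({0}ᶜ : Set E3), (fun y : E3 => g ‖y‖) x.1 ∂(Measure.comap Subtype.val volume) :=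
        (lintegral_subtype_comap (measurableSet_singleton 0).compl (fun y : E3 => g ‖y‖)).symm
    _ = ∫⁻ p : sphere (0:E3) 1 × Ioi (0:ℝ), g p.2
          ∂((volume : Measure E3).toSphere.prod (.volumeIoiPow (Module.finrank ℝ E3 - 1))) := by
        rw [← ((volume : Measure E3).measurePreserving_homeomorphUnitSphereProd.lintegral_comp_emb
          (Homeomorph.measurableEmbedding _) (fun p => g p.2.1))]
        simp
    _ = (volume : Measure E3).toSphere univ *
          ∫⁻ y : Ioi (0:ℝ), g y ∂(Measure.volumeIoiPow (Module.finrank ℝ E3 - 1)) := by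
        rw [lintegral_prod (fun p : sphere (0:E3) 1 × Ioi (0:ℝ) => g p.2.1)
          ((hg.comp (measurable_subtype_coe.comp measurable_snd)).aemeasurable)]
        simp [lintegral_const, mul_comm]
    _ = _ := by
        rw [hdim]
        congr 1
        calc ∫⁻ y : Ioi (0:ℝ), g y ∂(Measure.volumeIoiPow (3 - 1))
            = ∫⁻ y : Ioi (0:ℝ),
                ((fun r : Ioi (0:ℝ) => ENNReal.ofReal (r.1 ^ (3-1))) * fun y : Ioi (0:ℝ) => g y.1) y
                ∂(Measure.comap Subtype.val volume) :=
              lintegral_withDensity_eq_lintegral_mul _ (by fun_prop)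
                (hg.comp measurable_subtype_coe)
          _ = ∫⁻ y : Ioi (0:ℝ), (fun r : ℝ => ENNReal.ofReal (r ^ 2) * g r) y.1
                ∂(Measure.comap Subtype.val volume) := rfl
          _ = ∫⁻ r in Ioi (0:ℝ), ENNReal.ofReal (r ^ 2) * g r :=
              by exact lintegral_subtype_comap measurableSet_Ioi (fun r : ℝ => ENNReal.ofReal (r ^ 2) * g r)


lemma toSphere_univ_E3 : (volume : Measure E3).toSphere univ = ENNReal.ofReal (4 * Real.pi) := by
  have hdim : Module.finrank ℝ E3 = 3 := by simp [finrank_euclideanSpace]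
  rw [Measure.toSphere_apply_univ, hdim, EuclideanSpace.volume_ball]
  have hcard : Fintype.card (Fin 3) = 3 := by simp
  rw [hcard]
  have hΓ : Real.Gamma ((3:ℝ) / 2 + 1) = 3 / 4 * Real.sqrt Real.pi := by
    rw [Real.Gamma_add_one (by norm_num)]
    have : (3:ℝ)/2 = 1/2 + 1 := by norm_num
    rw [this, Real.Gamma_add_one (by norm_num), Real.Gamma_one_half_eq]
    ring
  push_cast
  rw [hΓ]
  have hs : Real.sqrt Real.pi ^ 3 / (3 / 4 * Real.sqrt Real.pi) = 4 / 3 * Real.pi := by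
    have h1 : Real.sqrt Real.pi ^ 3 = Real.pi * Real.sqrt Real.pi := by
      rw [pow_succ, Real.sq_sqrt Real.pi_nonneg]
    have h2 : Real.sqrt Real.pi ≠ 0 := by positivity
    field_simp [h1]
    linarith [Real.sq_sqrt Real.pi_nonneg]
  rw [hs]
  rw [show ((3:ℝ≥0∞)) = ENNReal.ofReal 3 by simp]
  simp only [ENNReal.ofReal_one, one_pow, one_mul]
  rw [← ENNReal.ofReal_mul (by norm_num)]
  congr 1
  ring

lemma oneD {γ M K : ℝ} (hγ0 : 0 < γ) (hγ1 : γ < 1) (hM : 0 < M) (hK : 0 < K) :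
    ∫⁻ r in Ioi (0:ℝ),
        ENNReal.ofReal (r ^ 2) * ENNReal.ofReal (min (K * r) (2 * M) * r ^ (-(3 + γ)))
      ≤ ENNReal.ofReal (M ^ (1-γ) * K ^ γ * (1/(1-γ) + 2/γ)) := by
  set r₀ : ℝ := M / K with hr₀
  have hr₀pos : 0 < r₀ := div_pos hM hK
  rw [← Set.Ioc_union_Ioi_eq_Ioi hr₀pos.le,
    lintegral_union measurableSet_Ioi Set.Ioc_disjoint_Ioi_same]
  have key1 : ∫⁻ r in Ioc (0:ℝ) r₀,
      ENNReal.ofReal (r ^ 2) * ENNReal.ofReal (min (K * r) (2 * M) * r ^ (-(3 + γ)))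
      ≤ ENNReal.ofReal (K * (r₀ ^ (1-γ)) / (1-γ)) := by
    have hint : IntegrableOn (fun r : ℝ => K * r ^ (-γ)) (Ioc 0 r₀) := by
      have := (intervalIntegral.intervalIntegrable_rpow' (a := 0) (b := r₀)
        (r := -γ) (by linarith)).const_mul K
      rwa [intervalIntegrable_iff_integrableOn_Ioc_of_le hr₀pos.le] at this
    calc ∫⁻ r in Ioc (0:ℝ) r₀,
        ENNReal.ofReal (r ^ 2) * ENNReal.ofReal (min (K * r) (2 * M) * r ^ (-(3 + γ)))
        ≤ ∫⁻ r in Ioc (0:ℝ) r₀, ENNReal.ofReal (K * r ^ (-γ)) := by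
          refine setLIntegral_mono' measurableSet_Ioc fun r hr => ?_
          rw [← ENNReal.ofReal_mul (by positivity)]
          refine ENNReal.ofReal_le_ofReal ?_
          have hr0 : 0 < r := hr.1
          have : min (K * r) (2 * M) ≤ K * r := min_le_left _ _
          calc r ^ 2 * (min (K * r) (2 * M) * r ^ (-(3 + γ)))
              ≤ r ^ 2 * ((K * r) * r ^ (-(3 + γ))) := by
                have hrp : (0:ℝ) ≤ r ^ (-(3+γ)) := Real.rpow_nonneg hr0.le _
                nlinarith [sq_nonneg r, mul_le_mul_of_nonneg_right this hrp,
                  sq_nonneg (r:ℝ)]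
            _ = K * (r ^ ((2:ℝ)+1+(-(3+γ)))) := by
                rw [Real.rpow_add hr0, Real.rpow_add hr0, Real.rpow_one,
                  Real.rpow_two]
                ring
            _ = K * r ^ (-γ) := by rw [show (2:ℝ)+1+(-(3+γ)) = -γ by ring]
      _ = ENNReal.ofReal (∫ r in Ioc (0:ℝ) r₀, K * r ^ (-γ)) := by
          rw [ofReal_integral_eq_lintegral_ofReal hint]
          filter_upwards [ae_restrict_mem measurableSet_Ioc] with r hr
          have : (0:ℝ) < r := hr.1
          positivity
      _ = ENNReal.ofReal (K * (r₀ ^ (1-γ)) / (1-γ)) := by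
          congr 1
          rw [integral_const_mul, ← intervalIntegral.integral_of_le hr₀pos.le,
            integral_rpow (Or.inl (by linarith))]
          rw [Real.zero_rpow (by intro h; linarith [h])]
          ring_nf
  have key2 : ∫⁻ r in Ioi r₀,
      ENNReal.ofReal (r ^ 2) * ENNReal.ofReal (min (K * r) (2 * M) * r ^ (-(3 + γ)))
      ≤ ENNReal.ofReal (2 * M * (r₀ ^ (-γ)) / γ) := by
    have hint : IntegrableOn (fun r : ℝ => 2 * M * r ^ (-(1+γ))) (Ioi r₀) :=
      (integrableOn_Ioi_rpow_of_lt (by linarith) hr₀pos).const_mul (2*M)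
    calc ∫⁻ r in Ioi r₀,
        ENNReal.ofReal (r ^ 2) * ENNReal.ofReal (min (K * r) (2 * M) * r ^ (-(3 + γ)))
        ≤ ∫⁻ r in Ioi r₀, ENNReal.ofReal (2 * M * r ^ (-(1+γ))) := by
          refine setLIntegral_mono' measurableSet_Ioi fun r hr => ?_
          rw [← ENNReal.ofReal_mul (by positivity)]
          refine ENNReal.ofReal_le_ofReal ?_
          have hr0 : 0 < r := lt_trans hr₀pos hr
          have hmin : min (K * r) (2 * M) ≤ 2 * M := min_le_right _ _
          calc r ^ 2 * (min (K * r) (2 * M) * r ^ (-(3 + γ)))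
              ≤ r ^ 2 * ((2 * M) * r ^ (-(3 + γ))) := by
                have hrp : (0:ℝ) ≤ r ^ (-(3+γ)) := Real.rpow_nonneg hr0.le _
                have := mul_le_mul_of_nonneg_right hmin hrp
                nlinarith [sq_nonneg r]
            _ = 2 * M * (r ^ ((2:ℝ)+(-(3+γ)))) := by
                rw [Real.rpow_add hr0, Real.rpow_two]
                ring
            _ = 2 * M * r ^ (-(1+γ)) := by rw [show (2:ℝ)+(-(3+γ)) = -(1+γ) by ring]
      _ = ENNReal.ofReal (∫ r in Ioi r₀, 2 * M * r ^ (-(1+γ))) := by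
          rw [ofReal_integral_eq_lintegral_ofReal hint]
          filter_upwards [ae_restrict_mem measurableSet_Ioi] with r hr
          have : (0:ℝ) < r := lt_trans hr₀pos hr
          positivity
      _ = ENNReal.ofReal (2 * M * (r₀ ^ (-γ)) / γ) := by
          congr 1
          rw [integral_const_mul, integral_Ioi_rpow_of_lt (by linarith) hr₀pos]
          rw [show (-(1+γ) + 1) = -γ by ring]
          field_simp
  refine le_trans (add_le_add key1 key2) ?_
  have hb1 : 0 ≤ K * (r₀ ^ (1-γ)) / (1-γ) :=
    div_nonneg (mul_nonneg hK.le (Real.rpow_nonneg hr₀pos.le _)) (by linarith)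
  have hb2 : 0 ≤ 2 * M * (r₀ ^ (-γ)) / γ :=
    div_nonneg (mul_nonneg (by positivity) (Real.rpow_nonneg hr₀pos.le _)) hγ0.le
  rw [← ENNReal.ofReal_add hb1 hb2]
  refine ENNReal.ofReal_le_ofReal (le_of_eq ?_)
  have h1 : K * r₀ ^ (1-γ) = M ^ (1-γ) * K ^ γ := by
    have e2 : K ^ γ * K ^ (1-γ) = K := by rw [← Real.rpow_add hK]; norm_num
    rw [hr₀, Real.div_rpow hM.le hK.le]
    have hKne : K ^ (1-γ) ≠ 0 := by positivity
    field_simp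
    linarith [e2, mul_comm (K ^ γ) (K ^ (1-γ))]
  have h2 : 2 * M * r₀ ^ (-γ) = 2 * (M ^ (1-γ) * K ^ γ) := by
    rw [hr₀, Real.div_rpow hM.le hK.le, Real.rpow_neg hM.le, Real.rpow_neg hK.le,
      Real.rpow_sub hM]
    rw [Real.rpow_one]
    have h3 : M ^ γ ≠ 0 := by positivity
    have h4 : K ^ γ ≠ 0 := by positivity
    field_simp
  rw [h1, h2]
  field_simp
section Main

variable {γ U M K : ℝ} {u : EuclideanSpace ℝ (Fin 3) → ℝ} {φ : EuclideanSpace ℝ (Fin 3) → ℝ}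

-- the weight
noncomputable def nu (M K γ : ℝ) (z : EuclideanSpace ℝ (Fin 3)) : ℝ≥0∞ :=
  ENNReal.ofReal (min (K * ‖z‖) (2 * M) * ‖z‖ ^ (-(3 + γ)))

lemma nu_meas (M K γ : ℝ) : Measurable (nu M K γ) := by
  apply Measurable.ennreal_ofReal
  apply Measurable.mul
  · exact (measurable_norm.const_mul K).min measurable_const
  · exact measurable_norm.pow_const _

lemma nu_lintegral_le (hγ0 : 0 < γ) (hγ1 : γ < 1) (hM : 0 < M) (hK : 0 < K) :
    ∫⁻ z : E3, nu M K γ z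
      ≤ ENNReal.ofReal (4 * Real.pi * (M ^ (1-γ) * K ^ γ * (1/(1-γ) + 2/γ))) := by
  have hg : Measurable (fun r : ℝ => ENNReal.ofReal (min (K * r) (2 * M) * r ^ (-(3 + γ)))) := by
    apply Measurable.ennreal_ofReal
    exact ((measurable_id.const_mul K).min measurable_const).mul
      (measurable_id.pow_const _)
  have := lintegral_radial (fun r : ℝ => ENNReal.ofReal (min (K * r) (2 * M) * r ^ (-(3 + γ)))) hg
  rw [show (∫⁻ z : E3, nu M K γ z) = ∫⁻ x : E3,
      (fun r : ℝ => ENNReal.ofReal (min (K * r) (2 * M) * r ^ (-(3 + γ)))) ‖x‖ from rfl, this,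
    toSphere_univ_E3]
  exact mul_le_mul_right (oneD hγ0 hγ1 hM hK) _ |>.trans_eq
    (ENNReal.ofReal_mul (by positivity)).symm
end Main
lemma pointwise_bound {γ M K : ℝ} {u φ : EuclideanSpace ℝ (Fin 3) → ℝ}
    (hbd : ∀ x, |φ x| ≤ M) (hlip : ∀ x y, |φ x - φ y| ≤ K * ‖x - y‖)
    (x z : E3) :
    (‖(u (x + z) - u x) * (φ (x + z) - φ x) * ‖z‖ ^ (-(3 + γ))‖₊ : ℝ≥0∞)
      ≤ ((‖u (x + z)‖₊ : ℝ≥0∞) + (‖u x‖₊ : ℝ≥0∞)) * nu M K γ z := by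
  have hc : (0:ℝ) ≤ ‖z‖ ^ (-(3+γ)) := Real.rpow_nonneg (norm_nonneg _) _
  have h2 : |φ (x+z) - φ x| ≤ min (K * ‖z‖) (2*M) := by
    refine le_min ?_ ?_
    · have := hlip (x+z) x
      rwa [add_sub_cancel_left] at this
    · calc |φ (x+z) - φ x| ≤ |φ (x+z)| + |φ x| := abs_sub _ _
        _ ≤ M + M := add_le_add (hbd _) (hbd _)
        _ = 2 * M := by ring
  have habs : |(u (x + z) - u x) * (φ (x + z) - φ x) * ‖z‖ ^ (-(3 + γ))|
      ≤ (|u (x+z)| + |u x|) * (min (K * ‖z‖) (2*M) * ‖z‖ ^ (-(3+γ))) := by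
    rw [abs_mul, abs_mul, abs_of_nonneg hc]
    have h1 : |u (x+z) - u x| ≤ |u (x+z)| + |u x| := abs_sub _ _
    have hmin0 : (0:ℝ) ≤ min (K * ‖z‖) (2*M) := le_trans (abs_nonneg _) h2
    calc |u (x+z) - u x| * |φ (x+z) - φ x| * ‖z‖^(-(3+γ))
        ≤ (|u (x+z)| + |u x|) * (min (K * ‖z‖) (2*M)) * ‖z‖^(-(3+γ)) :=
          mul_le_mul (mul_le_mul h1 h2 (abs_nonneg _) (by positivity)) le_rfl hc (by positivity)
      _ = _ := by ring
  calc (‖(u (x + z) - u x) * (φ (x + z) - φ x) * ‖z‖ ^ (-(3 + γ))‖₊ : ℝ≥0∞)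
      = ENNReal.ofReal |(u (x + z) - u x) * (φ (x + z) - φ x) * ‖z‖ ^ (-(3 + γ))| :=
        Real.enorm_eq_ofReal_abs _
    _ ≤ ENNReal.ofReal ((|u (x+z)| + |u x|) * (min (K * ‖z‖) (2*M) * ‖z‖ ^ (-(3+γ)))) :=
        ENNReal.ofReal_le_ofReal habs
    _ = ENNReal.ofReal (|u (x+z)| + |u x|) * nu M K γ z := ENNReal.ofReal_mul (by positivity)
    _ = _ := by
        rw [ENNReal.ofReal_add (abs_nonneg _) (abs_nonneg _), ← Real.enorm_eq_ofReal_abs,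
          ← Real.enorm_eq_ofReal_abs]
        rfl

/-- The endpoint `p = 2` of the commutator estimate (Lemma 5.2 of the paper):
if `‖u‖_{L²} ≤ U`, `|φ| ≤ M` and `φ` is `K`-Lipschitz, then the function
`x ↦ ∫ δ_z u(x) δ_z φ(x) ‖z‖^{-(3+γ)} dz` is defined a.e. and its `L²` norm is at most
`8π (1/(1-γ) + 2/γ) U M^{1-γ} K^γ`. -/
theorem stmt_7 (γ U M K : ℝ) (hγ : γ ∈ Set.Ioo (0 : ℝ) 1)
    (u : EuclideanSpace ℝ (Fin 3) → ℝ) (hu : Measurable u)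
    (φ : EuclideanSpace ℝ (Fin 3) → ℝ)
    (hU : 0 < U) (hM : 0 < M) (hK : 0 < K)
    (huU : eLpNorm u 2 volume ≤ ENNReal.ofReal U)
    (hbd : ∀ x, |φ x| ≤ M)
    (hlip : ∀ x y, |φ x - φ y| ≤ K * ‖x - y‖) :
    (∀ᵐ x : EuclideanSpace ℝ (Fin 3),
        Integrable (fun z : EuclideanSpace ℝ (Fin 3) =>
          (u (x + z) - u x) * (φ (x + z) - φ x) * ‖z‖ ^ (-(3 + γ)))) ∧
      eLpNorm (fun x : EuclideanSpace ℝ (Fin 3) =>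
          ∫ z : EuclideanSpace ℝ (Fin 3),
            (u (x + z) - u x) * (φ (x + z) - φ x) * ‖z‖ ^ (-(3 + γ)))
        2 volume
      ≤ ENNReal.ofReal
          (8 * Real.pi * (1 / (1 - γ) + 2 / γ) * U * M ^ (1 - γ) * K ^ γ) := by
  obtain ⟨hγ0, hγ1⟩ := hγ
  have hφc : Continuous φ := by
    have hl : LipschitzWith (Real.toNNReal K) φ := by
      refine LipschitzWith.of_dist_le_mul fun a b => ?_
      rw [Real.dist_eq, dist_eq_norm, Real.coe_toNNReal _ hK.le]
      exact hlip a b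
    exact hl.continuous
  set f : E3 → E3 → ℝ := fun x z =>
    (u (x + z) - u x) * (φ (x + z) - φ x) * ‖z‖ ^ (-(3 + γ)) with hf
  set ν : E3 → ℝ≥0∞ := nu M K γ with hνdef
  have hνm : Measurable ν := nu_meas M K γ
  set I : ℝ≥0∞ := ∫⁻ z : E3, ν z with hIdef
  set C : ℝ := 4 * Real.pi * (M ^ (1-γ) * K ^ γ * (1/(1-γ) + 2/γ)) with hCdef
  have hIle : I ≤ ENNReal.ofReal C := nu_lintegral_le hγ0 hγ1 hM hK
  have hIfin : I < ⊤ := lt_of_le_of_lt hIle ENNReal.ofReal_lt_top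
  set S : ℝ≥0∞ := ∫⁻ x : E3, (‖u x‖₊ : ℝ≥0∞) ^ (2:ℝ) with hSdef
  have hSnorm : eLpNorm u 2 volume = S ^ ((1:ℝ)/2) := by
    rw [hSdef, eLpNorm_eq_lintegral_rpow_enorm_toReal two_ne_zero ENNReal.ofNat_ne_top]
    norm_num
    rfl
  have hSle : S ^ ((1:ℝ)/2) ≤ ENNReal.ofReal U := hSnorm ▸ huU
  have hSfin : S < ⊤ := by
    have h1 : S = (S ^ ((1:ℝ)/2)) ^ (2:ℝ) := by
      rw [← ENNReal.rpow_mul]; norm_num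
    rw [h1]
    exact lt_of_le_of_lt (ENNReal.rpow_le_rpow hSle (by norm_num))
      (ENNReal.rpow_lt_top_of_nonneg (by norm_num) ENNReal.ofReal_ne_top)
  -- measurability
  have hmz : ∀ x : E3, Measurable (f x) := by
    intro x
    have h1 : Measurable fun z : E3 => x + z := measurable_id.const_add x
    exact (((hu.comp h1).sub measurable_const).mul
      ((hφc.measurable.comp h1).sub measurable_const)).mul (measurable_norm.pow_const _)
  have huxz : Measurable fun p : E3 × E3 => (‖u (p.1 + p.2)‖₊ : ℝ≥0∞) :=
    (hu.comp measurable_add).enorm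
  set A : E3 → ℝ≥0∞ := fun x => ∫⁻ z : E3, (‖u (x + z)‖₊ : ℝ≥0∞) * ν z with hAdef
  have hAmeas : Measurable A :=
    (huxz.mul (hνm.comp measurable_snd)).lintegral_prod_right'
  set B : E3 → ℝ≥0∞ := fun x => (‖u x‖₊ : ℝ≥0∞) * I with hBdef
  have hBmeas : Measurable B := hu.enorm.mul_const I
  -- Cauchy-Schwarz
  have hCS : ∀ x : E3, A x ^ (2:ℝ) ≤ (∫⁻ z : E3, (‖u (x+z)‖₊ : ℝ≥0∞) ^ (2:ℝ) * ν z) * I := by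
    intro x
    have hux : Measurable fun z : E3 => (‖u (x+z)‖₊ : ℝ≥0∞) :=
      (hu.comp (measurable_id.const_add x)).enorm
    have h := ENNReal.lintegral_mul_le_Lp_mul_Lq (volume : Measure E3)
      (Real.holderConjugate_iff.mpr ⟨one_lt_two, by norm_num⟩ : Real.HolderConjugate 2 2)
      ((hux.mul (hνm.pow_const ((1:ℝ)/2))).aemeasurable)
      ((hνm.pow_const ((1:ℝ)/2)).aemeasurable)
    calc A x ^ (2:ℝ)
        = (∫⁻ z : E3, ((‖u (x+z)‖₊ : ℝ≥0∞) * ν z ^ ((1:ℝ)/2)) * ν z ^ ((1:ℝ)/2)) ^ (2:ℝ) := by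
          congr 1
          refine lintegral_congr fun z => ?_
          rw [mul_assoc, ← ENNReal.rpow_add_of_nonneg _ _ (by norm_num) (by norm_num)]
          norm_num
      _ ≤ ((∫⁻ z : E3, ((‖u (x+z)‖₊ : ℝ≥0∞) * ν z ^ ((1:ℝ)/2)) ^ (2:ℝ)) ^ ((1:ℝ)/2)
            * (∫⁻ z : E3, (ν z ^ ((1:ℝ)/2)) ^ (2:ℝ)) ^ ((1:ℝ)/2)) ^ (2:ℝ) :=
          ENNReal.rpow_le_rpow h (by norm_num)
      _ = (∫⁻ z : E3, ((‖u (x+z)‖₊ : ℝ≥0∞) * ν z ^ ((1:ℝ)/2)) ^ (2:ℝ))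
            * ∫⁻ z : E3, (ν z ^ ((1:ℝ)/2)) ^ (2:ℝ) := by
          rw [ENNReal.mul_rpow_of_nonneg _ _ (by norm_num : (0:ℝ) ≤ 2),
            ← ENNReal.rpow_mul, ← ENNReal.rpow_mul]
          norm_num
      _ = (∫⁻ z : E3, (‖u (x+z)‖₊ : ℝ≥0∞) ^ (2:ℝ) * ν z) * I := by
          congr 1
          · refine lintegral_congr fun z => ?_
            rw [ENNReal.mul_rpow_of_nonneg _ _ (by norm_num : (0:ℝ) ≤ 2),
              ← ENNReal.rpow_mul]
            norm_num
          · refine lintegral_congr fun z => ?_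
            rw [← ENNReal.rpow_mul]
            norm_num
  -- square integral bounds
  have huxz2 : Measurable fun p : E3 × E3 => (‖u (p.1 + p.2)‖₊ : ℝ≥0∞) ^ (2:ℝ) * ν p.2 :=
    (huxz.pow_const _).mul (hνm.comp measurable_snd)
  have hA2 : ∫⁻ x : E3, A x ^ (2:ℝ) ≤ S * I * I := by
    calc ∫⁻ x : E3, A x ^ (2:ℝ)
        ≤ ∫⁻ x : E3, (∫⁻ z : E3, (‖u (x+z)‖₊ : ℝ≥0∞) ^ (2:ℝ) * ν z) * I :=
          lintegral_mono hCS
      _ = (∫⁻ x : E3, ∫⁻ z : E3, (‖u (x+z)‖₊ : ℝ≥0∞) ^ (2:ℝ) * ν z) * I :=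
          lintegral_mul_const _ huxz2.lintegral_prod_right'
      _ = (∫⁻ z : E3, ∫⁻ x : E3, (‖u (x+z)‖₊ : ℝ≥0∞) ^ (2:ℝ) * ν z) * I := by
          rw [lintegral_lintegral_swap huxz2.aemeasurable]
      _ = (∫⁻ z : E3, (∫⁻ x : E3, (‖u (x+z)‖₊ : ℝ≥0∞) ^ (2:ℝ)) * ν z) * I := by
          congr 1
          refine lintegral_congr fun z => ?_
          exact lintegral_mul_const _
            (((hu.comp (measurable_id.add_const z)).enorm).pow_const _)
      _ = (∫⁻ z : E3, S * ν z) * I := by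
          congr 1
          refine lintegral_congr fun z => ?_
          rw [lintegral_add_right_eq_self (fun y : E3 => (‖u y‖₊ : ℝ≥0∞) ^ (2:ℝ)) z]
      _ = S * I * I := by rw [lintegral_const_mul _ hνm]
  have hB2 : ∫⁻ x : E3, B x ^ (2:ℝ) = S * (I * I) := by
    calc ∫⁻ x : E3, B x ^ (2:ℝ)
        = ∫⁻ x : E3, (‖u x‖₊ : ℝ≥0∞) ^ (2:ℝ) * (I * I) := by
          refine lintegral_congr fun x => ?_
          rw [hBdef, ENNReal.mul_rpow_of_nonneg _ _ (by norm_num : (0:ℝ) ≤ 2)]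
          congr 1
          rw [show (2:ℝ) = 1 + 1 by norm_num,
            ENNReal.rpow_add_of_nonneg _ _ (by norm_num) (by norm_num), ENNReal.rpow_one]
      _ = S * (I * I) := lintegral_mul_const _ (hu.enorm.pow_const _)
  -- pointwise domination of the inner lintegral
  have hdom : ∀ x : E3, ∫⁻ z : E3, (‖f x z‖₊ : ℝ≥0∞) ≤ A x + B x := by
    intro x
    have hux : Measurable fun z : E3 => (‖u (x+z)‖₊ : ℝ≥0∞) :=
      (hu.comp (measurable_id.const_add x)).enorm
    calc ∫⁻ z : E3, (‖f x z‖₊ : ℝ≥0∞)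
        ≤ ∫⁻ z : E3, ((‖u (x + z)‖₊ : ℝ≥0∞) + (‖u x‖₊ : ℝ≥0∞)) * ν z :=
          lintegral_mono fun z => pointwise_bound hbd hlip x z
      _ = ∫⁻ z : E3, ((‖u (x + z)‖₊ : ℝ≥0∞) * ν z + (‖u x‖₊ : ℝ≥0∞) * ν z) :=
          lintegral_congr fun z => add_mul _ _ _
      _ = A x + ∫⁻ z : E3, (‖u x‖₊ : ℝ≥0∞) * ν z :=
          lintegral_add_left' (hux.mul hνm).aemeasurable _
      _ = A x + B x := by rw [lintegral_const_mul _ hνm]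
  -- a.e. finiteness of A
  have hAfin : ∀ᵐ x : E3, A x < ⊤ := by
    have h2 : ∫⁻ x : E3, A x ^ (2:ℝ) ≠ ⊤ :=
      (lt_of_le_of_lt hA2 (ENNReal.mul_lt_top (ENNReal.mul_lt_top hSfin hIfin) hIfin)).ne
    filter_upwards [ae_lt_top (hAmeas.pow_const _) h2] with x hx
    by_contra h
    rw [not_lt, top_le_iff] at h
    rw [h] at hx
    simp [ENNReal.top_rpow_of_pos (by norm_num : (0:ℝ) < 2)] at hx
  have hBfin : ∀ x : E3, B x < ⊤ :=
    fun x => ENNReal.mul_lt_top ENNReal.coe_lt_top hIfin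
  have hint : ∀ᵐ x : E3, Integrable (f x) := by
    filter_upwards [hAfin] with x hx
    refine ⟨(hmz x).aestronglyMeasurable, ?_⟩
    exact lt_of_le_of_lt (hdom x) (ENNReal.add_lt_top.mpr ⟨hx, hBfin x⟩)
  refine ⟨hint, ?_⟩
  -- eLpNorm bound
  have hFpt : ∀ x : E3, (‖∫ z : E3, f x z‖₊ : ℝ≥0∞) ≤ A x + B x :=
    fun x => le_trans (enorm_integral_le_lintegral_enorm _) (hdom x)
  have half : ∀ a b : ℝ≥0∞, (b * a * a) ^ ((1:ℝ)/2) = b ^ ((1:ℝ)/2) * a := by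
    intro a b
    rw [ENNReal.mul_rpow_of_nonneg _ _ (by norm_num : (0:ℝ) ≤ 1/2),
      ENNReal.mul_rpow_of_nonneg _ _ (by norm_num : (0:ℝ) ≤ 1/2), mul_assoc,
      ← ENNReal.rpow_add_of_nonneg _ _ (by norm_num) (by norm_num)]
    norm_num
  calc eLpNorm (fun x : E3 => ∫ z : E3, f x z) 2 volume
      = (∫⁻ x : E3, (‖∫ z : E3, f x z‖₊ : ℝ≥0∞) ^ (2:ℝ)) ^ ((1:ℝ)/2) := by
        rw [eLpNorm_eq_lintegral_rpow_enorm_toReal two_ne_zero ENNReal.ofNat_ne_top]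
        norm_num
        rfl
    _ ≤ (∫⁻ x : E3, (A x + B x) ^ (2:ℝ)) ^ ((1:ℝ)/2) := by
        refine ENNReal.rpow_le_rpow (lintegral_mono fun x => ?_) (by norm_num)
        exact ENNReal.rpow_le_rpow (hFpt x) (by norm_num)
    _ ≤ (∫⁻ x : E3, A x ^ (2:ℝ)) ^ ((1:ℝ)/2) + (∫⁻ x : E3, B x ^ (2:ℝ)) ^ ((1:ℝ)/2) := by
        exact ENNReal.lintegral_Lp_add_le hAmeas.aemeasurable hBmeas.aemeasurable
          (by norm_num : (1:ℝ) ≤ 2)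
    _ ≤ (S * I * I) ^ ((1:ℝ)/2) + (S * (I * I)) ^ ((1:ℝ)/2) :=
        add_le_add (ENNReal.rpow_le_rpow hA2 (by norm_num))
          (ENNReal.rpow_le_rpow (le_of_eq hB2) (by norm_num))
    _ = S ^ ((1:ℝ)/2) * I + S ^ ((1:ℝ)/2) * I := by
        rw [half, ← mul_assoc, half]
    _ ≤ ENNReal.ofReal U * ENNReal.ofReal C + ENNReal.ofReal U * ENNReal.ofReal C :=
        add_le_add (mul_le_mul' hSle hIle) (mul_le_mul' hSle hIle)
    _ = ENNReal.ofReal (2 * (U * C)) := by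
        rw [← ENNReal.ofReal_mul hU.le, ← two_mul, ← ENNReal.ofReal_ofNat,
          ← ENNReal.ofReal_mul (by norm_num)]
    _ ≤ ENNReal.ofReal (8 * Real.pi * (1 / (1 - γ) + 2 / γ) * U * M ^ (1 - γ) * K ^ γ) := by
        refine ENNReal.ofReal_le_ofReal (le_of_eq ?_)
        rw [hCdef]
        ring
end

section
/- Let T, M, E ∈ (0,∞) and let u : (0,T) × ℝ³ → ℝ³ be measurable. Suppose that for almost every t ∈ (0,T): (i) λ³ · |{ x ∈ ℝ³ : ‖u(t,x)‖ > λ }| ≤ M³ for every λ > 0, and (ii) the map t ↦ ( ∫_{ℝ³} ‖u(t,x)‖⁶ dx )^{1/3} is integrable on (0,T) with ∫₀^T ( ∫_{ℝ³} ‖u(t,x)‖⁶ dx )^{1/3} dt ≤ E². Then ∫₀^T ∫_{ℝ³} ‖u(t,x)‖⁴ dx dt ≤ 6·M²·E². -/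
open MeasureTheory Set

lemma aux_interp {α : Type*} [MeasurableSpace α] (μ : Measure α)
    (f : α → ℝ) (hf : Measurable f) (hnn : ∀ x, 0 ≤ f x) (M : ℝ) (hM : 0 < M)
    (hweak : ∀ lam : ℝ, 0 < lam →
      ENNReal.ofReal (lam ^ 3) * μ {x | lam < f x} ≤ ENNReal.ofReal (M ^ 3)) :
    ∫⁻ x, ENNReal.ofReal (f x ^ 4) ∂μ ≤
      ENNReal.ofReal (6 * M ^ 2) * (∫⁻ x, ENNReal.ofReal (f x ^ 6) ∂μ) ^ (1/3 : ℝ) := by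
  set S := ∫⁻ x, ENNReal.ofReal (f x ^ 6) ∂μ with hSdef
  rcases eq_or_ne S 0 with h0 | h0
  · have hfz : ∀ᵐ x ∂μ, f x = 0 := by
      have h := (lintegral_eq_zero_iff ((hf.pow_const 6).ennreal_ofReal)).1 h0
      filter_upwards [h] with x hx
      simp only [Pi.zero_apply, ENNReal.ofReal_eq_zero] at hx
      rcases (hnn x).eq_or_lt with h | h
      · exact h.symm
      · exact absurd (pow_pos h 6) (not_lt.2 hx)
    have hz : ∫⁻ x, ENNReal.ofReal (f x ^ 4) ∂μ = 0 := by
      rw [lintegral_eq_zero_iff ((hf.pow_const 4).ennreal_ofReal)]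
      filter_upwards [hfz] with x hx
      simp [hx]
    simp [hz]
  rcases eq_or_ne S ⊤ with htop | htop
  · rw [htop, ENNReal.top_rpow_of_pos (by norm_num : (0:ℝ) < 1/3),
      ENNReal.mul_top (by simp [ENNReal.ofReal_eq_zero]; positivity)]
    exact le_top
  -- main case
  set s := S.toReal with hsdef
  have hs : 0 < s := ENNReal.toReal_pos h0 htop
  have hSs : S = ENNReal.ofReal s := (ENNReal.ofReal_toReal htop).symm
  set a := s ^ (1/3 : ℝ) with hadef
  have ha : 0 < a := Real.rpow_pos_of_pos hs _
  have ha3 : a ^ 3 = s := by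
    rw [hadef, ← Real.rpow_natCast (s ^ (1/3:ℝ)) 3, ← Real.rpow_mul hs.le]
    norm_num
  set lam0 := a / M with hl0def
  have hl : 0 < lam0 := div_pos ha hM
  -- layer cake
  have key : ∫⁻ x, ENNReal.ofReal (f x ^ 4) ∂μ
      = ENNReal.ofReal 4 * ∫⁻ t in Ioi (0:ℝ), μ {y | t < f y} * ENNReal.ofReal (t ^ 3) := by
    have h := lintegral_rpow_eq_lintegral_meas_lt_mul μ (Filter.Eventually.of_forall hnn)
      hf.aemeasurable (by norm_num : (0:ℝ) < 4)
    have e4 : ∀ x : ℝ, x ^ (4:ℝ) = x ^ (4:ℕ) := fun x => by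
      rw [← Real.rpow_natCast x 4]; norm_num
    have e3 : ∀ x : ℝ, x ^ ((4:ℝ) - 1) = x ^ (3:ℕ) := fun x => by
      rw [← Real.rpow_natCast x 3]; norm_num
    simp_rw [e4, e3] at h
    exact h
  -- first piece
  have hb1 : ∫⁻ t in Ioc (0:ℝ) lam0, μ {y | t < f y} * ENNReal.ofReal (t ^ 3)
      ≤ ENNReal.ofReal (M ^ 3 * lam0) := by
    calc ∫⁻ t in Ioc (0:ℝ) lam0, μ {y | t < f y} * ENNReal.ofReal (t ^ 3)
        ≤ ∫⁻ _ in Ioc (0:ℝ) lam0, ENNReal.ofReal (M ^ 3) := by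
          refine lintegral_mono_ae ?_
          filter_upwards [ae_restrict_mem measurableSet_Ioc] with t ht
          rw [mul_comm]; exact hweak t ht.1
      _ = ENNReal.ofReal (M ^ 3) * volume (Ioc (0:ℝ) lam0) := setLIntegral_const _ _
      _ = ENNReal.ofReal (M ^ 3 * lam0) := by
          rw [Real.volume_Ioc, sub_zero, ENNReal.ofReal_mul (by positivity)]
  -- Chebyshev pointwise
  have hcheb : ∀ t : ℝ, 0 < t →
      μ {y | t < f y} * ENNReal.ofReal (t ^ 3) ≤ S * ENNReal.ofReal (t ^ (-3 : ℝ)) := by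
    intro t ht
    have hsub : {y | t < f y} ⊆ {y | ENNReal.ofReal (t ^ 6) ≤ ENNReal.ofReal (f y ^ 6)} := by
      intro y hy
      exact ENNReal.ofReal_le_ofReal (pow_le_pow_left₀ ht.le (le_of_lt hy) 6)
    have hch : ENNReal.ofReal (t ^ 6) * μ {y | t < f y} ≤ S := by
      refine le_trans (mul_le_mul_right (measure_mono hsub) _) ?_
      exact mul_meas_ge_le_lintegral₀ ((hf.pow_const 6).ennreal_ofReal).aemeasurable _
    have hsplit3 : ENNReal.ofReal (t ^ 3)
        = ENNReal.ofReal (t ^ 6) * ENNReal.ofReal (t ^ (-3 : ℝ)) := by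
      rw [← ENNReal.ofReal_mul (by positivity)]
      congr 1
      rw [← Real.rpow_natCast t 6, ← Real.rpow_add ht, ← Real.rpow_natCast t 3]
      norm_num
    calc μ {y | t < f y} * ENNReal.ofReal (t ^ 3)
        = (ENNReal.ofReal (t ^ 6) * μ {y | t < f y}) * ENNReal.ofReal (t ^ (-3:ℝ)) := by
          rw [hsplit3]; ring
      _ ≤ S * ENNReal.ofReal (t ^ (-3:ℝ)) := mul_le_mul_left hch _
  -- second piece
  have hb2 : ∫⁻ t in Ioi lam0, μ {y | t < f y} * ENNReal.ofReal (t ^ 3)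
      ≤ S * ENNReal.ofReal (lam0 ^ (-2 : ℝ) / 2) := by
    calc ∫⁻ t in Ioi lam0, μ {y | t < f y} * ENNReal.ofReal (t ^ 3)
        ≤ ∫⁻ t in Ioi lam0, S * ENNReal.ofReal (t ^ (-3:ℝ)) := by
          refine lintegral_mono_ae ?_
          filter_upwards [ae_restrict_mem measurableSet_Ioi] with t ht
          exact hcheb t (hl.trans ht)
      _ = S * ∫⁻ t in Ioi lam0, ENNReal.ofReal (t ^ (-3:ℝ)) := lintegral_const_mul' _ _ htop
      _ = S * ENNReal.ofReal (lam0 ^ (-2:ℝ) / 2) := by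
          congr 1
          rw [← ofReal_integral_eq_lintegral_ofReal
            (integrableOn_Ioi_rpow_of_lt (by norm_num) hl) ?_]
          · rw [integral_Ioi_rpow_of_lt (by norm_num) hl]
            rw [show (-3:ℝ) + 1 = -2 by norm_num]
            congr 1
            ring
          · filter_upwards [ae_restrict_mem measurableSet_Ioi] with t ht
            exact Real.rpow_nonneg (hl.trans ht).le _
  -- assemble
  have hsplit : ∫⁻ t in Ioi (0:ℝ), μ {y | t < f y} * ENNReal.ofReal (t ^ 3)
      = (∫⁻ t in Ioc (0:ℝ) lam0, μ {y | t < f y} * ENNReal.ofReal (t ^ 3))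
        + ∫⁻ t in Ioi lam0, μ {y | t < f y} * ENNReal.ofReal (t ^ 3) := by
    rw [← lintegral_union measurableSet_Ioi (Ioc_disjoint_Ioi le_rfl),
      Ioc_union_Ioi_eq_Ioi hl.le]
  have hlam0pow : lam0 ^ (-2:ℝ) = M ^ 2 / a ^ 2 := by
    rw [hl0def, Real.rpow_neg (div_pos ha hM).le, show (2:ℝ) = ((2:ℕ):ℝ) by norm_num,
      Real.rpow_natCast, div_pow, inv_div]
  have hreal : 4 * (M ^ 3 * lam0 + s * (lam0 ^ (-2:ℝ) / 2)) = 6 * M ^ 2 * a := by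
    rw [hlam0pow, hl0def, ← ha3]
    field_simp
    ring
  calc ∫⁻ x, ENNReal.ofReal (f x ^ 4) ∂μ
      = ENNReal.ofReal 4 * ((∫⁻ t in Ioc (0:ℝ) lam0, μ {y | t < f y} * ENNReal.ofReal (t ^ 3))
        + ∫⁻ t in Ioi lam0, μ {y | t < f y} * ENNReal.ofReal (t ^ 3)) := by rw [key, hsplit]
    _ ≤ ENNReal.ofReal 4 * (ENNReal.ofReal (M ^ 3 * lam0)
        + ENNReal.ofReal s * ENNReal.ofReal (lam0 ^ (-2:ℝ) / 2)) := by
        rw [← hSs]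
        exact mul_le_mul_right (add_le_add hb1 hb2) _
    _ = ENNReal.ofReal (4 * (M ^ 3 * lam0 + s * (lam0 ^ (-2:ℝ) / 2))) := by
        rw [← ENNReal.ofReal_mul hs.le, ← ENNReal.ofReal_add (by positivity) (by positivity),
          ← ENNReal.ofReal_mul (by norm_num)]
    _ = ENNReal.ofReal (6 * M ^ 2 * a) := by rw [hreal]
    _ = ENNReal.ofReal (6 * M ^ 2) * S ^ (1/3 : ℝ) := by
        rw [hSs, ENNReal.ofReal_rpow_of_pos hs, ← ENNReal.ofReal_mul (by positivity), hadef]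

/-- Section 3.2 of the paper: `L^∞(time; L^{3,∞}) ∩ L²(time; L⁶) ⊂ L⁴(time; L⁴)`,
quantitatively: if for a.e. `t ∈ (0,T)` one has `λ³ |{x : ‖u(t,x)‖ > λ}| ≤ M³` for all
`λ > 0`, and `∫₀ᵀ (∫ ‖u(t,x)‖⁶ dx)^{1/3} dt ≤ E²`, then
`∫₀ᵀ ∫ ‖u(t,x)‖⁴ dx dt ≤ 6 M² E²`. -/
theorem stmt_10 (T M E : ℝ) (hT : 0 < T) (hM : 0 < M) (hE : 0 < E)
    (u : ℝ × EuclideanSpace ℝ (Fin 3) → EuclideanSpace ℝ (Fin 3))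
    (hu : Measurable u)
    (h1 : ∀ᵐ t ∂(volume.restrict (Set.Ioo (0 : ℝ) T)), ∀ lam : ℝ, 0 < lam →
      ENNReal.ofReal (lam ^ 3) *
          volume {x : EuclideanSpace ℝ (Fin 3) | lam < ‖u (t, x)‖}
        ≤ ENNReal.ofReal (M ^ 3))
    (h2 : ∫⁻ t in Set.Ioo (0 : ℝ) T,
        (∫⁻ x : EuclideanSpace ℝ (Fin 3), ENNReal.ofReal (‖u (t, x)‖ ^ 6)) ^ (1/3 : ℝ)
      ≤ ENNReal.ofReal (E ^ 2)) :
    ∫⁻ t in Set.Ioo (0 : ℝ) T,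
        ∫⁻ x : EuclideanSpace ℝ (Fin 3), ENNReal.ofReal (‖u (t, x)‖ ^ 4)
      ≤ ENNReal.ofReal (6 * M ^ 2 * E ^ 2) := by
  have hpt : ∀ᵐ t ∂(volume.restrict (Set.Ioo (0 : ℝ) T)),
      (∫⁻ x : EuclideanSpace ℝ (Fin 3), ENNReal.ofReal (‖u (t, x)‖ ^ 4))
        ≤ ENNReal.ofReal (6 * M ^ 2) *
          (∫⁻ x : EuclideanSpace ℝ (Fin 3), ENNReal.ofReal (‖u (t, x)‖ ^ 6)) ^ (1/3 : ℝ) := by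
    filter_upwards [h1] with t ht
    exact aux_interp volume (fun x => ‖u (t, x)‖)
      ((hu.comp measurable_prodMk_left).norm) (fun x => norm_nonneg _) M hM ht
  calc ∫⁻ t in Set.Ioo (0 : ℝ) T,
        ∫⁻ x : EuclideanSpace ℝ (Fin 3), ENNReal.ofReal (‖u (t, x)‖ ^ 4)
      ≤ ∫⁻ t in Set.Ioo (0 : ℝ) T, ENNReal.ofReal (6 * M ^ 2) *
          (∫⁻ x : EuclideanSpace ℝ (Fin 3), ENNReal.ofReal (‖u (t, x)‖ ^ 6)) ^ (1/3 : ℝ) :=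
        lintegral_mono_ae hpt
    _ = ENNReal.ofReal (6 * M ^ 2) * ∫⁻ t in Set.Ioo (0 : ℝ) T,
          (∫⁻ x : EuclideanSpace ℝ (Fin 3), ENNReal.ofReal (‖u (t, x)‖ ^ 6)) ^ (1/3 : ℝ) :=
        lintegral_const_mul' _ _ ENNReal.ofReal_ne_top
    _ ≤ ENNReal.ofReal (6 * M ^ 2) * ENNReal.ofReal (E ^ 2) := mul_le_mul_right h2 _
    _ = ENNReal.ofReal (6 * M ^ 2 * E ^ 2) := (ENNReal.ofReal_mul (by positivity)).symm
end
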